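/- arXiv:0709.4017 — 6 statements merged into one kernel-verified Lean document; each statement's English description precedes it below -/
import Mathlib

section
/- Let W₁, …, Wₘ be nonempty sets given by SDP representations as in the context, and let 𝒞 be the set defined there. Then conv(⋃_{k=1}^m Wₖ) ⊆ 𝒞. -/
open MvPolynomial Metric Set Pointwise Filter

noncomputable section

/-- `ℝⁿ` with the Euclidean norm. -/
abbrev Rn (n : ℕ) : Type := EuclideanSpace ℝ (Fin n)

/-- A set `S ⊆ ℝⁿ` is SDP representable if it is the projection of a spectrahedron:
there are symmetric matrices `A₀, A i, B j` with
`S = { x | ∃ u, A₀ + Σ xᵢ Aᵢ + Σ uⱼ Bⱼ ⪰ 0 }`. -/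
def IsSDPRepresentable {n : ℕ} (S : Set (Rn n)) : Prop :=
  ∃ (N d : ℕ) (A₀ : Matrix (Fin d) (Fin d) ℝ)
    (A : Fin n → Matrix (Fin d) (Fin d) ℝ) (B : Fin N → Matrix (Fin d) (Fin d) ℝ),
    A₀.IsSymm ∧ (∀ i, (A i).IsSymm) ∧ (∀ j, (B j).IsSymm) ∧
    S = {x : Rn n | ∃ u : Fin N → ℝ,
      (A₀ + ∑ i, x i • A i + ∑ j, u j • B j).PosSemidef}

/-- Evaluation of a polynomial at a point of `ℝⁿ`. -/
def peval {n : ℕ} (g : MvPolynomial (Fin n) ℝ) (x : Rn n) : ℝ :=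
  MvPolynomial.eval (fun i => x i) g

/-- The gradient `∇g(u)` of a polynomial. -/
def pgrad {n : ℕ} (g : MvPolynomial (Fin n) ℝ) (u : Rn n) : Fin n → ℝ :=
  fun i => MvPolynomial.eval (fun j => u j) (MvPolynomial.pderiv i g)

/-- The Hessian `∇²g(u)` of a polynomial. -/
def phess {n : ℕ} (g : MvPolynomial (Fin n) ℝ) (u : Rn n) : Matrix (Fin n) (Fin n) ℝ :=
  Matrix.of fun i j =>
    MvPolynomial.eval (fun k => u k) (MvPolynomial.pderiv i (MvPolynomial.pderiv j g))

/-- A polynomial `g` is sos-concave if `-∇²g(x) = W(x)ᵀ W(x)` for some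
(possibly nonsquare) matrix polynomial `W`. -/
def SosConcave {n : ℕ} (g : MvPolynomial (Fin n) ℝ) : Prop :=
  ∃ (k : ℕ) (W : Fin k → Fin n → MvPolynomial (Fin n) ℝ),
    ∀ i j, - MvPolynomial.pderiv i (MvPolynomial.pderiv j g) = ∑ l, W l i * W l j

/-- `g` is quasi-concave at `u` : `-vᵀ∇²g(u)v ≥ 0` for every `v` with `∇g(u)ᵀv = 0`. -/
def QuasiConcaveAt {n : ℕ} (g : MvPolynomial (Fin n) ℝ) (u : Rn n) : Prop :=
  ∀ v : Fin n → ℝ, (∑ i, pgrad g u i * v i) = 0 →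
    0 ≤ -(∑ i, ∑ j, v i * phess g u i j * v j)

/-- `g` is strictly quasi-concave at `u` : if `∇g(u) ≠ 0` then `-vᵀ∇²g(u)v > 0`
for all nonzero `v ⊥ ∇g(u)`; if `∇g(u) = 0` then `-∇²g(u)` is positive definite. -/
def StrictlyQuasiConcaveAt {n : ℕ} (g : MvPolynomial (Fin n) ℝ) (u : Rn n) : Prop :=
  (pgrad g u ≠ 0 ∧ ∀ v : Fin n → ℝ, v ≠ 0 → (∑ i, pgrad g u i * v i) = 0 →
      0 < -(∑ i, ∑ j, v i * phess g u i j * v j)) ∨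
  (pgrad g u = 0 ∧ (-(phess g u)).PosDef)

/-- The convex boundary `∂_c T` : points of `T` minimizing some unit linear functional. -/
def convexBoundary {n : ℕ} (T : Set (Rn n)) : Set (Rn n) :=
  {u ∈ T | ∃ l : Rn n, ‖l‖ = 1 ∧ ∀ x ∈ T, (∑ i, l i * u i) ≤ ∑ i, l i * x i}

/-- `v` is a nonsingular point of `∂T` (w.r.t. defining polynomials `g`):
exactly one defining polynomial vanishes at `v`, with nonvanishing gradient. -/
def IsNonsingularBoundaryPoint {n m : ℕ} (g : Fin m → MvPolynomial (Fin n) ℝ)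
    (T : Set (Rn n)) (v : Rn n) : Prop :=
  v ∈ frontier T ∧ ∃ i, peval (g i) v = 0 ∧ pgrad (g i) v ≠ 0 ∧
    ∀ j, peval (g j) v = 0 → j = i

/-- A polynomial is SOS if it is a finite sum of squares of polynomials. -/
def IsSOSPoly {n : ℕ} (p : MvPolynomial (Fin n) ℝ) : Prop :=
  ∃ (k : ℕ) (q : Fin k → MvPolynomial (Fin n) ℝ), p = ∑ i, (q i) ^ 2

/-- The polynomial `δ² - ‖x - u‖²`. -/
def ballPoly {n : ℕ} (u : Rn n) (δ : ℝ) : MvPolynomial (Fin n) ℝ :=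
  MvPolynomial.C (δ ^ 2) - ∑ i, (MvPolynomial.X i - MvPolynomial.C (u i)) ^ 2

/-- The family `h₁, …, h_{m₂}` extended by the ball polynomial `h_m(x) = δ² - ‖x-u‖²`. -/
def extFamily {n m2 : ℕ} (h : Fin m2 → MvPolynomial (Fin n) ℝ) (u : Rn n) (δ : ℝ) :
    Fin (m2 + 1) → MvPolynomial (Fin n) ℝ :=
  Fin.snoc h (ballPoly u δ)

/-- The positive definite Lagrange Hessian (PDLH) condition at `u` with radius `δu`,
for the set `T = {x | f(x) = 0, h(x) ≥ 0}`. -/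
def PDLHAt {n m1 m2 : ℕ} (f : Fin m1 → MvPolynomial (Fin n) ℝ)
    (h : Fin m2 → MvPolynomial (Fin n) ℝ) (T : Set (Rn n)) (u : Rn n) (δu : ℝ) : Prop :=
  ∀ l : Rn n, ‖l‖ = 1 → ∀ δ : ℝ, 0 < δ → δ ≤ δu →
    ∀ v ∈ T ∩ closedBall u δ,
      (∀ x ∈ T ∩ closedBall u δ, (∑ i, l i * v i) ≤ ∑ i, l i * x i) →
      ∃ (lam : Fin m1 → ℝ) (mu : Fin (m2 + 1) → ℝ),
        (∀ j, 0 ≤ mu j) ∧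
        (∀ j, mu j * peval (extFamily h u δ j) v = 0) ∧
        (∀ i, l i = (∑ k, lam k * pgrad (f k) v i) +
            ∑ j, mu j * pgrad (extFamily h u δ j) v i) ∧
        ∀ x ∈ closedBall u δ,
          (Matrix.of (fun i i' : Fin n =>
            -(∑ k, lam k * phess (f k) x i i') -
              ∑ j, mu j * phess (extFamily h u δ j) x i i')).PosDef

/-- `Z(g) ∩ ∂S` has strictly convex shape with respect to `S`. -/
def StrictlyConvexShape {n : ℕ} (g : MvPolynomial (Fin n) ℝ) (S : Set (Rn n)) : Prop :=
  ∃ Y U : Set (Rn n), IsOpen U ∧ Y = {x | peval g x = 0} ∩ U ∧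
    {x | peval g x = 0} ∩ frontier S ⊆ Y ∧
    (∀ p ∈ closure Y, pgrad g p ≠ 0) ∧
    ∀ p ∈ closure Y,
      (∃ ε : ℝ, (ε = 1 ∨ ε = -1) ∧
        ∀ q ∈ S ∪ closure Y, ε * (∑ i, pgrad g p i * (q i - p i)) ≤ 0) ∧
      ∀ q ∈ S ∪ closure Y, (∑ i, pgrad g p i * (q i - p i)) = 0 → q = p

private lemma psd_smul {d : ℕ} {M : Matrix (Fin d) (Fin d) ℝ} (hM : M.PosSemidef)
    {a : ℝ} (ha : 0 ≤ a) : (a • M).PosSemidef := by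
  refine ⟨?_, fun x => ?_⟩
  · unfold Matrix.IsHermitian
    rw [Matrix.conjTranspose_smul, hM.1]
    simp
  · exact (hM.smul ha).2 x

/-- `conv(⋃ₖ Wₖ) ⊆ 𝒞` for SDP representable sets `Wₖ`. -/
theorem convexHull_union_subset_sdp_patch {n m : ℕ} (N d : Fin m → ℕ)
    (A : ∀ k, Matrix (Fin (d k)) (Fin (d k)) ℝ)
    (B : ∀ k, Fin n → Matrix (Fin (d k)) (Fin (d k)) ℝ)
    (C : ∀ k, Fin (N k) → Matrix (Fin (d k)) (Fin (d k)) ℝ)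
    (hA : ∀ k, (A k).IsSymm) (hB : ∀ k i, (B k i).IsSymm) (hCsym : ∀ k j, (C k j).IsSymm)
    (W : Fin m → Set (Rn n))
    (hW : ∀ k, W k = {x : Rn n | ∃ u : Fin (N k) → ℝ,
        (A k + ∑ i, x i • B k i + ∑ j, u j • C k j).PosSemidef})
    (hne : ∀ k, (W k).Nonempty)
    (Cset : Set (Rn n))
    (hCset : Cset = {z : Rn n | ∃ xx : Fin m → Rn n, z = ∑ k, xx k ∧
        ∃ lam ∈ stdSimplex ℝ (Fin m), ∀ k, ∃ u : Fin (N k) → ℝ,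
          (lam k • A k + ∑ i, xx k i • B k i + ∑ j, u j • C k j).PosSemidef}) :
    convexHull ℝ (⋃ k, W k) ⊆ Cset := by
  subst hCset
  apply convexHull_min
  · rintro z hz
    simp only [Set.mem_iUnion] at hz
    obtain ⟨k₀, hk₀⟩ := hz
    rw [hW k₀] at hk₀
    obtain ⟨u, hu⟩ := hk₀
    refine ⟨fun k => if k = k₀ then z else 0, ?_,
      fun k => if k = k₀ then 1 else 0, ⟨fun k => ?_, ?_⟩, fun k => ?_⟩
    · rw [Finset.sum_ite_eq' Finset.univ k₀ (fun _ => z)]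
      simp
    · dsimp only; split <;> norm_num
    · rw [Finset.sum_ite_eq' Finset.univ k₀ (fun _ => (1:ℝ))]
      simp
    · by_cases hk : k = k₀
      · subst hk
        exact ⟨u, by simpa using hu⟩
      · refine ⟨0, ?_⟩
        simpa [hk] using (Matrix.PosSemidef.zero (n := Fin (d k)) (R := ℝ))
  · rintro z hz z' hz' a b ha hb hab
    obtain ⟨xx, rfl, lam, hlam, hM⟩ := hz
    obtain ⟨xx', rfl, lam', hlam', hM'⟩ := hz'
    refine ⟨fun k => a • xx k + b • xx' k, ?_,
      fun k => a * lam k + b * lam' k, ?_, fun k => ?_⟩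
    · rw [Finset.sum_add_distrib, ← Finset.smul_sum, ← Finset.smul_sum]
    · exact convex_stdSimplex ℝ (Fin m) hlam hlam' ha hb hab
    · obtain ⟨u, hu⟩ := hM k
      obtain ⟨u', hu'⟩ := hM' k
      refine ⟨fun j => a * u j + b * u' j, ?_⟩
      have key : ((a * lam k + b * lam' k) • A k
          + ∑ i, (a • xx k + b • xx' k) i • B k i
          + ∑ j, (a * u j + b * u' j) • C k j)
          = a • (lam k • A k + ∑ i, xx k i • B k i + ∑ j, u j • C k j)
            + b • (lam' k • A k + ∑ i, xx' k i • B k i + ∑ j, u' j • C k j) := by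
        simp only [PiLp.add_apply, PiLp.smul_apply, smul_eq_mul, add_smul, mul_smul,
          Finset.sum_add_distrib, smul_add, Finset.smul_sum]
        abel
      rw [key]
      exact (psd_smul hu ha).add (psd_smul hu' hb)
end
end

section
/- Let W₁, …, Wₘ be nonempty sets given by SDP representations as in the context, and let 𝒞 be the set defined there. Then the closures satisfy cl(𝒞) = cl(conv(⋃_{k=1}^m Wₖ)). -/
open MvPolynomial Metric Set Pointwise Filter

noncomputable section

set_option maxHeartbeats 1000000 in
private lemma psd_smul_aux {d : ℕ} {M : Matrix (Fin d) (Fin d) ℝ} (h : M.PosSemidef) {c : ℝ} (hc : 0 ≤ c) :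
    (c • M).PosSemidef := by
  refine ⟨?_, fun x => ?_⟩
  · unfold Matrix.IsHermitian
    rw [Matrix.conjTranspose_smul, h.1]; simp
  · exact (h.smul hc).2 x

set_option maxHeartbeats 1000000 in
/-- `cl(𝒞) = cl(conv(⋃ₖ Wₖ))` for SDP representable sets `Wₖ`. -/
theorem closure_sdp_patch_eq_closure_convexHull_union {n m : ℕ} (N d : Fin m → ℕ)
    (A : ∀ k, Matrix (Fin (d k)) (Fin (d k)) ℝ)
    (B : ∀ k, Fin n → Matrix (Fin (d k)) (Fin (d k)) ℝ)
    (C : ∀ k, Fin (N k) → Matrix (Fin (d k)) (Fin (d k)) ℝ)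
    (hA : ∀ k, (A k).IsSymm) (hB : ∀ k i, (B k i).IsSymm) (hCsym : ∀ k j, (C k j).IsSymm)
    (W : Fin m → Set (Rn n))
    (hW : ∀ k, W k = {x : Rn n | ∃ u : Fin (N k) → ℝ,
        (A k + ∑ i, x i • B k i + ∑ j, u j • C k j).PosSemidef})
    (hne : ∀ k, (W k).Nonempty)
    (Cset : Set (Rn n))
    (hCset : Cset = {z : Rn n | ∃ xx : Fin m → Rn n, z = ∑ k, xx k ∧
        ∃ lam ∈ stdSimplex ℝ (Fin m), ∀ k, ∃ u : Fin (N k) → ℝ,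
          (lam k • A k + ∑ i, xx k i • B k i + ∑ j, u j • C k j).PosSemidef}) :
    closure Cset = closure (convexHull ℝ (⋃ k, W k)) := by
  classical
  subst hCset
  set T : Set (Rn n) := {z : Rn n | ∃ xx : Fin m → Rn n, z = ∑ k, xx k ∧
        ∃ lam ∈ stdSimplex ℝ (Fin m), ∀ k, ∃ u : Fin (N k) → ℝ,
          (lam k • A k + ∑ i, xx k i • B k i + ∑ j, u j • C k j).PosSemidef} with hT
  -- Step 1: each W k ⊆ T
  have hWT : ∀ k, W k ⊆ T := by
    intro k x hx
    rw [hW k] at hx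
    obtain ⟨u, hu⟩ := hx
    refine ⟨fun j => if j = k then x else 0, ?_, fun j => if j = k then 1 else 0, ⟨?_, ?_⟩, ?_⟩
    · simp
    · intro j; dsimp; split <;> norm_num
    · simp
    · intro j
      by_cases hj : j = k
      · subst hj
        exact ⟨u, by simpa using hu⟩
      · refine ⟨0, ?_⟩
        simp only [if_neg hj, Pi.zero_apply, PiLp.zero_apply, zero_smul,
          Finset.sum_const_zero, add_zero, zero_add]
        exact Matrix.PosSemidef.zero
  -- Step 2: T is convex
  have hTconv : Convex ℝ T := by
    rintro z ⟨xx, rfl, lam, hlam, hpsd⟩ z' ⟨xx', rfl, lam', hlam', hpsd'⟩ a b ha hb hab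
    refine ⟨fun k => a • xx k + b • xx' k, ?_, fun k => a * lam k + b * lam' k, ⟨?_, ?_⟩, ?_⟩
    · simp [Finset.smul_sum, Finset.sum_add_distrib]
    · intro k; exact add_nonneg (mul_nonneg ha (hlam.1 k)) (mul_nonneg hb (hlam'.1 k))
    · rw [Finset.sum_add_distrib, ← Finset.mul_sum, ← Finset.mul_sum, hlam.2, hlam'.2]
      simpa using hab
    · intro k
      obtain ⟨u, hu⟩ := hpsd k
      obtain ⟨u', hu'⟩ := hpsd' k
      refine ⟨fun j => a * u j + b * u' j, ?_⟩
      have key : ((a * lam k + b * lam' k) • A k + ∑ i, (a • xx k + b • xx' k) i • B k i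
            + ∑ j, (a * u j + b * u' j) • C k j)
          = a • (lam k • A k + ∑ i, xx k i • B k i + ∑ j, u j • C k j)
            + b • (lam' k • A k + ∑ i, xx' k i • B k i + ∑ j, u' j • C k j) := by
        simp only [PiLp.add_apply, PiLp.smul_apply, smul_eq_mul, add_smul, mul_smul,
          Finset.sum_add_distrib, smul_add, Finset.smul_sum]
        abel
      rw [key]
      exact (psd_smul_aux hu ha).add (psd_smul_aux hu' hb)
  have h1 : convexHull ℝ (⋃ k, W k) ⊆ T :=
    convexHull_min (Set.iUnion_subset hWT) hTconv
  -- Step 3: T ⊆ closure (convexHull ℝ (⋃ k, W k))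
  have h2 : T ⊆ closure (convexHull ℝ (⋃ k, W k)) := by
    rintro z ⟨xx, rfl, lam, hlam, hpsd⟩
    choose u hu using hpsd
    choose y hy using hne
    have hyv : ∀ k, ∃ v : Fin (N k) → ℝ,
        (A k + ∑ i, y k i • B k i + ∑ j, v j • C k j).PosSemidef := by
      intro k; have := hy k; rwa [hW k] at this
    choose v hv using hyv
    set Z : Finset (Fin m) := Finset.univ.filter (fun k => lam k = 0) with hZ
    set c : Rn n := ∑ k, (if lam k = 0 then y k else -((Z.card : ℝ) • xx k)) with hc
    set δ : ℝ := 1 / ((Z.card : ℝ) + 1) with hδ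
    have hcard0 : (0:ℝ) ≤ (Z.card : ℝ) := Nat.cast_nonneg _
    have hcard : (0:ℝ) < (Z.card : ℝ) + 1 := by linarith
    have hδpos : 0 < δ := by rw [hδ]; exact div_pos one_pos hcard
    have hmem : ∀ ε ∈ Set.Ioo (0:ℝ) δ, (∑ k, xx k) + ε • c ∈ convexHull ℝ (⋃ k, W k) := by
      intro ε ⟨hε0, hεδ⟩
      have hεZ : ε * (Z.card : ℝ) < 1 := by
        rw [hδ] at hεδ
        have := (lt_div_iff₀ hcard).mp hεδ
        nlinarith [hε0.le]
      set μ : Fin m → ℝ := fun k => if lam k = 0 then ε else lam k * (1 - ε * Z.card) with hμ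
      set p : Fin m → Rn n := fun k => if lam k = 0 then y k + ε⁻¹ • xx k else (lam k)⁻¹ • xx k
        with hp
      have hsum : ∑ k, μ k • p k = (∑ k, xx k) + ε • c := by
        have : ∀ k, μ k • p k
            = xx k + ε • (if lam k = 0 then y k else -((Z.card : ℝ) • xx k)) := by
          intro k
          by_cases hk : lam k = 0
          · simp only [hμ, hp, if_pos hk, smul_add, smul_smul,
              mul_inv_cancel₀ hε0.ne', one_smul]
            abel
          · simp only [hμ, hp, if_neg hk, smul_smul, smul_neg]
            rw [mul_comm (lam k), mul_assoc, mul_inv_cancel₀ hk, mul_one]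
            rw [sub_smul, one_smul, mul_smul]
            abel
        rw [Finset.sum_congr rfl (fun k _ => this k), Finset.sum_add_distrib, hc,
          Finset.smul_sum]
      rw [← hsum]
      refine Convex.sum_mem (convex_convexHull ℝ _) ?_ ?_ ?_
      · intro k _
        by_cases hk : lam k = 0
        · simp only [hμ, if_pos hk]; exact hε0.le
        · simp only [hμ, if_neg hk]
          exact mul_nonneg (hlam.1 k) (by linarith)
      · have : ∀ k, μ k = (if lam k = 0 then ε else 0) + lam k * (1 - ε * Z.card) := by
          intro k
          by_cases hk : lam k = 0 <;> simp [hμ, hk]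
        rw [Finset.sum_congr rfl (fun k _ => this k), Finset.sum_add_distrib,
          ← Finset.sum_filter, Finset.sum_const, ← Finset.sum_mul, hlam.2, ← hZ]
        simp only [nsmul_eq_mul, one_mul]
        ring
      · intro k _
        refine subset_convexHull ℝ _ (Set.mem_iUnion.2 ⟨k, ?_⟩)
        rw [hW k]
        by_cases hk : lam k = 0
        · simp only [hp, if_pos hk]
          refine ⟨fun j => v k j + ε⁻¹ * u k j, ?_⟩
          have hxx : (∑ i, xx k i • B k i + ∑ j, u k j • C k j).PosSemidef := by
            have := hu k
            rw [hk, zero_smul, zero_add] at this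
            exact this
          have key : (A k + ∑ i, (y k + ε⁻¹ • xx k) i • B k i
                + ∑ j, (v k j + ε⁻¹ * u k j) • C k j)
              = (A k + ∑ i, y k i • B k i + ∑ j, v k j • C k j)
                + ε⁻¹ • (∑ i, xx k i • B k i + ∑ j, u k j • C k j) := by
            simp only [PiLp.add_apply, PiLp.smul_apply, smul_eq_mul, add_smul, mul_smul,
              Finset.sum_add_distrib, smul_add, Finset.smul_sum]
            abel
          rw [key]
          exact (hv k).add (psd_smul_aux hxx (by positivity))
        · simp only [hp, if_neg hk]
          have hlk : 0 < lam k := (hlam.1 k).lt_of_ne (Ne.symm hk)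
          refine ⟨fun j => (lam k)⁻¹ * u k j, ?_⟩
          have key : (A k + ∑ i, ((lam k)⁻¹ • xx k) i • B k i
                + ∑ j, ((lam k)⁻¹ * u k j) • C k j)
              = (lam k)⁻¹ • (lam k • A k + ∑ i, xx k i • B k i + ∑ j, u k j • C k j) := by
            simp only [PiLp.smul_apply, smul_eq_mul, mul_smul, smul_add, Finset.smul_sum,
              inv_smul_smul₀ hk]
          rw [key]
          exact psd_smul_aux (hu k) (by positivity)
    have htend : Filter.Tendsto (fun ε : ℝ => (∑ k, xx k) + ε • c) (nhdsWithin 0 (Set.Ioi 0))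
        (nhds ((∑ k, xx k))) := by
      have hcont : Filter.Tendsto (fun ε : ℝ => (∑ k, xx k) + ε • c) (nhds 0)
          (nhds ((∑ k, xx k) + (0:ℝ) • c)) := by
        exact (continuous_const.add (continuous_id.smul continuous_const)).tendsto 0
      simpa using hcont.mono_left nhdsWithin_le_nhds
    refine mem_closure_of_tendsto htend ?_
    filter_upwards [Ioo_mem_nhdsGT_of_mem (Set.left_mem_Ico.2 hδpos)] with ε hε
    exact hmem ε hε
  exact Set.Subset.antisymm ((closure_mono h2).trans closure_closure.subset)
    (closure_mono h1)
end
end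

section
/- Let S ⊆ ℝⁿ be a compact convex set. Then S is SDP representable if and only if for every u ∈ ∂S there exists δ > 0 such that S ∩ B̄(u, δ) is SDP representable, where B̄(u, δ) = {x ∈ ℝⁿ : ‖x − u‖ ≤ δ}. -/
open MvPolynomial Metric Set Pointwise Filter

noncomputable section

namespace SDPH
open Matrix

/-- SDP representability with arbitrary finite index types. -/
def Rep {n : ℕ} (S : Set (Rn n)) : Prop :=
  ∃ (U D : Type) (_ : Fintype U) (_ : Fintype D)
    (A₀ : Matrix D D ℝ) (A : Fin n → Matrix D D ℝ) (B : U → Matrix D D ℝ),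
    A₀.IsSymm ∧ (∀ i, (A i).IsSymm) ∧ (∀ j, (B j).IsSymm) ∧
    S = {x : Rn n | ∃ u : U → ℝ, (A₀ + ∑ i, x i • A i + ∑ j, u j • B j).PosSemidef}

lemma rep_of_isSDP {n : ℕ} {S : Set (Rn n)} (h : IsSDPRepresentable S) : Rep S := by
  obtain ⟨N, d, A₀, A, B, h1, h2, h3, h4⟩ := h
  exact ⟨Fin N, Fin d, inferInstance, inferInstance, A₀, A, B, h1, h2, h3, h4⟩

lemma psd_submatrix_equiv {D D' : Type} [Fintype D] [Fintype D'] (e : D' ≃ D)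
    {M : Matrix D D ℝ} : (M.submatrix e e).PosSemidef ↔ M.PosSemidef := by
  constructor
  · intro h
    have := h.submatrix e.symm
    rwa [Matrix.submatrix_submatrix, Equiv.self_comp_symm, Matrix.submatrix_id_id] at this
  · intro h; exact h.submatrix e

lemma Rep.isSDP {n : ℕ} {S : Set (Rn n)} (h : Rep S) : IsSDPRepresentable S := by
  obtain ⟨U, D, _, _, A₀, A, B, h1, h2, h3, h4⟩ := h
  refine ⟨Fintype.card U, Fintype.card D, A₀.submatrix (Fintype.equivFin D).symm (Fintype.equivFin D).symm,
    fun i => (A i).submatrix (Fintype.equivFin D).symm (Fintype.equivFin D).symm,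
    fun j => (B ((Fintype.equivFin U).symm j)).submatrix (Fintype.equivFin D).symm (Fintype.equivFin D).symm,
    h1.submatrix _, fun i => (h2 i).submatrix _, fun j => (h3 _).submatrix _, ?_⟩
  rw [h4]
  ext x
  simp only [mem_setOf_eq]
  set eD := (Fintype.equivFin D).symm
  set eU := (Fintype.equivFin U).symm
  constructor
  · rintro ⟨u, hu⟩
    refine ⟨fun j => u (eU j), ?_⟩
    have : (A₀.submatrix eD eD + ∑ i, x i • (A i).submatrix eD eD
        + ∑ j, u (eU j) • (B (eU j)).submatrix eD eD)
        = (A₀ + ∑ i, x i • A i + ∑ j, u j • B j).submatrix eD eD := by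
      have hsum : (∑ j, u (eU j) • (B (eU j)).submatrix eD eD : Matrix _ _ ℝ)
          = ∑ j : U, u j • (B j).submatrix eD eD :=
        Fintype.sum_equiv eU _ _ (fun j => rfl)
      ext i j
      simp [Matrix.submatrix_apply, Matrix.add_apply, Matrix.sum_apply, hsum]
    rw [this, psd_submatrix_equiv]
    exact hu
  · rintro ⟨u, hu⟩
    refine ⟨fun j => u (eU.symm j), ?_⟩
    have heq : (A₀.submatrix eD eD + ∑ i, x i • (A i).submatrix eD eD
        + ∑ j, u j • (B (eU j)).submatrix eD eD)
        = (A₀ + ∑ i, x i • A i + ∑ j : U, u (eU.symm j) • B j).submatrix eD eD := by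
      have hsum : (∑ j : Fin (Fintype.card U), u j • (B (eU j)).submatrix eD eD : Matrix _ _ ℝ)
          = ∑ j : U, u (eU.symm j) • (B j).submatrix eD eD :=
        Fintype.sum_equiv eU _ _ (fun j => by simp)
      ext i j
      simp [Matrix.submatrix_apply, Matrix.add_apply, Matrix.sum_apply, hsum]
    rw [heq] at hu
    exact (psd_submatrix_equiv eD).mp hu

lemma rep_iff {n : ℕ} {S : Set (Rn n)} : Rep S ↔ IsSDPRepresentable S :=
  ⟨Rep.isSDP, rep_of_isSDP⟩

lemma psd_nonneg {D : Type} [Fintype D] {M : Matrix D D ℝ} (h : M.PosSemidef)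
    (x : D → ℝ) : 0 ≤ x ⬝ᵥ (M *ᵥ x) := by
  have := h.dotProduct_mulVec_nonneg x
  rwa [show star x = x from funext fun i => star_trivial _] at this

lemma psd_smul {D : Type} [Fintype D] {M : Matrix D D ℝ} (h : M.PosSemidef) {c : ℝ}
    (hc : 0 ≤ c) : (c • M).PosSemidef := by
  refine Matrix.PosSemidef.of_dotProduct_mulVec_nonneg ?_ ?_
  · show _ᴴ = _
    rw [Matrix.conjTranspose_smul, h.1.eq]
    simp
  · intro x
    rw [Matrix.smul_mulVec, dotProduct_smul, smul_eq_mul]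
    exact mul_nonneg hc (h.dotProduct_mulVec_nonneg x)

section Blocks

variable {D₁ D₂ : Type} [Fintype D₁] [Fintype D₂]
set_option linter.unusedSectionVars false

lemma bdiag_add (M M' : Matrix D₁ D₁ ℝ) (N N' : Matrix D₂ D₂ ℝ) :
    fromBlocks M 0 0 N + fromBlocks M' 0 0 N' = fromBlocks (M + M') 0 0 (N + N') := by
  simp [Matrix.fromBlocks_add]

lemma bdiag_smul (c : ℝ) (M : Matrix D₁ D₁ ℝ) (N : Matrix D₂ D₂ ℝ) :
    c • fromBlocks M 0 0 N = fromBlocks (c • M) 0 0 (c • N) := by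
  simp [Matrix.fromBlocks_smul]

lemma bdiag_sum {ι : Type*} (s : Finset ι) (f : ι → Matrix D₁ D₁ ℝ) (g : ι → Matrix D₂ D₂ ℝ) :
    ∑ i ∈ s, fromBlocks (f i) 0 0 (g i) = fromBlocks (∑ i ∈ s, f i) 0 0 (∑ i ∈ s, g i) := by
  classical
  induction s using Finset.induction_on with
  | empty => simp [Matrix.fromBlocks_zero]
  | insert _ _ ha ih =>
      rw [Finset.sum_insert ha, Finset.sum_insert ha, Finset.sum_insert ha, ih, bdiag_add]

lemma bdiag_isSymm {M : Matrix D₁ D₁ ℝ} {N : Matrix D₂ D₂ ℝ} (hM : M.IsSymm) (hN : N.IsSymm) :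
    (fromBlocks M 0 0 N).IsSymm := by
  unfold Matrix.IsSymm
  rw [Matrix.fromBlocks_transpose]
  simp [hM.eq, hN.eq]

lemma bdiag_psd {M : Matrix D₁ D₁ ℝ} {N : Matrix D₂ D₂ ℝ} :
    (fromBlocks M 0 0 N).PosSemidef ↔ M.PosSemidef ∧ N.PosSemidef := by
  constructor
  · intro h
    have h1 := h.submatrix (Sum.inl : D₁ → D₁ ⊕ D₂)
    have h2 := h.submatrix (Sum.inr : D₂ → D₁ ⊕ D₂)
    have e1 : (fromBlocks M 0 0 N).submatrix (Sum.inl : D₁ → D₁ ⊕ D₂) Sum.inl = M := by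
      ext i j; simp [Matrix.submatrix_apply]
    have e2 : (fromBlocks M 0 0 N).submatrix (Sum.inr : D₂ → D₁ ⊕ D₂) Sum.inr = N := by
      ext i j; simp [Matrix.submatrix_apply]
    rw [e1] at h1; rw [e2] at h2
    exact ⟨h1, h2⟩
  · rintro ⟨hM, hN⟩
    refine Matrix.PosSemidef.of_dotProduct_mulVec_nonneg ?_ ?_
    · show _ᴴ = _
      rw [Matrix.fromBlocks_conjTranspose, hM.1.eq, hN.1.eq]
      simp only [Matrix.conjTranspose_zero]
    · intro x
      rw [show star x = x from funext fun i => star_trivial _]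
      rw [← Sum.elim_comp_inl_inr x, Matrix.fromBlocks_mulVec]
      simp only [Matrix.zero_mulVec, add_zero, zero_add, sumElim_dotProduct_sumElim]
      exact add_nonneg (psd_nonneg hM _) (psd_nonneg hN _)

end Blocks

lemma rep_empty {n : ℕ} : Rep (∅ : Set (Rn n)) := by
  refine ⟨Fin 0, Unit, inferInstance, inferInstance,
    Matrix.diagonal (fun _ => (-1 : ℝ)), fun _ => 0, fun _ => 0,
    Matrix.isSymm_diagonal _, fun i => Matrix.isSymm_zero, fun j => Matrix.isSymm_zero, ?_⟩
  ext x
  simp [Matrix.posSemidef_diagonal_iff]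

lemma rep_univ {n : ℕ} : Rep (univ : Set (Rn n)) := by
  refine ⟨Fin 0, Unit, inferInstance, inferInstance, 0, fun _ => 0, fun _ => 0,
    Matrix.isSymm_zero, fun i => Matrix.isSymm_zero, fun j => Matrix.isSymm_zero, ?_⟩
  ext x
  simp only [mem_univ, mem_setOf_eq, true_iff]
  exact ⟨fun _ => 0, by simpa using Matrix.PosSemidef.zero⟩

lemma Rep.inter {n : ℕ} {S T : Set (Rn n)} (hS : Rep S) (hT : Rep T) : Rep (S ∩ T) := by
  obtain ⟨U₁, D₁, _, _, P₀, P, Q, hP₀, hP, hQ, hSe⟩ := hS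
  obtain ⟨U₂, D₂, _, _, R₀, R, T', hR₀, hR, hT', hTe⟩ := hT
  refine ⟨U₁ ⊕ U₂, D₁ ⊕ D₂, inferInstance, inferInstance,
    fromBlocks P₀ 0 0 R₀, fun i => fromBlocks (P i) 0 0 (R i),
    Sum.elim (fun j => fromBlocks (Q j) 0 0 0) (fun j => fromBlocks 0 0 0 (T' j)),
    bdiag_isSymm hP₀ hR₀, fun i => bdiag_isSymm (hP i) (hR i), ?_, ?_⟩
  · rintro (j | j)
    · exact bdiag_isSymm (hQ j) Matrix.isSymm_zero
    · exact bdiag_isSymm Matrix.isSymm_zero (hT' j)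
  have key : ∀ (x : Rn n) (u : U₁ ⊕ U₂ → ℝ),
      (fromBlocks P₀ 0 0 R₀ + ∑ i, x i • fromBlocks (P i) 0 0 (R i) +
        ∑ j, u j • Sum.elim (fun j => fromBlocks (Q j) 0 0 0)
          (fun j => fromBlocks 0 0 0 (T' j)) j)
      = fromBlocks (P₀ + ∑ i, x i • P i + ∑ j, u (Sum.inl j) • Q j) 0 0
          (R₀ + ∑ i, x i • R i + ∑ j, u (Sum.inr j) • T' j) := by
    intro x u
    rw [Fintype.sum_sum_type]
    simp only [Sum.elim_inl, Sum.elim_inr, bdiag_smul, smul_zero, bdiag_sum, bdiag_add]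
    simp
  ext x
  simp only [mem_inter_iff, hSe, hTe, mem_setOf_eq]
  constructor
  · rintro ⟨⟨u₁, h₁⟩, ⟨u₂, h₂⟩⟩
    refine ⟨Sum.elim u₁ u₂, ?_⟩
    rw [key]
    exact bdiag_psd.mpr ⟨by simpa using h₁, by simpa using h₂⟩
  · rintro ⟨u, hu⟩
    rw [key] at hu
    obtain ⟨h₁, h₂⟩ := bdiag_psd.mp hu
    exact ⟨⟨fun j => u (Sum.inl j), h₁⟩, ⟨fun j => u (Sum.inr j), h₂⟩⟩

end SDPH

namespace SDPH
open Matrix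

variable {n : ℕ}

/-- The arrow matrix `[[δI, w],[wᵀ, δ]]`. -/
def Arrow (w : Fin n → ℝ) (δ : ℝ) : Matrix (Fin n ⊕ Unit) (Fin n ⊕ Unit) ℝ :=
  Matrix.of fun s t =>
    match s, t with
    | .inl i, .inl j => if i = j then δ else 0
    | .inl i, .inr _ => w i
    | .inr _, .inl j => w j
    | .inr _, .inr _ => δ

lemma arrow_isSymm (w : Fin n → ℝ) (δ : ℝ) : (Arrow w δ).IsSymm := by
  unfold Matrix.IsSymm
  ext s t
  rcases s with i | _ <;> rcases t with j | _ <;>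
    simp [Arrow, Matrix.transpose_apply, eq_comm]

lemma isSymm_posSemidef_iff {D : Type} [Fintype D] {M : Matrix D D ℝ} (hs : M.IsSymm) :
    M.PosSemidef ↔ ∀ v : D → ℝ, 0 ≤ v ⬝ᵥ (M *ᵥ v) := by
  constructor
  · exact fun h v => psd_nonneg h v
  · intro h
    refine Matrix.PosSemidef.of_dotProduct_mulVec_nonneg ?_ fun v => ?_
    · rw [Matrix.IsHermitian, Matrix.conjTranspose_eq_transpose_of_trivial]
      exact hs
    · rw [show star v = v from funext fun i => star_trivial _]
      exact h v

lemma arrow_form (w : Fin n → ℝ) (δ : ℝ) (v : Fin n ⊕ Unit → ℝ) :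
    v ⬝ᵥ (Arrow w δ *ᵥ v) =
      δ * (∑ i, v (Sum.inl i) ^ 2) +
        2 * v (Sum.inr ()) * (∑ i, w i * v (Sum.inl i)) + δ * v (Sum.inr ()) ^ 2 := by
  simp only [dotProduct, Matrix.mulVec, Fintype.sum_sum_type, Finset.univ_unique,
    Finset.sum_singleton, Arrow, Matrix.of_apply, ite_mul, zero_mul,
    show (default : Unit) = () from rfl]
  have h1 : ∀ i : Fin n,
      (∑ j, (if i = j then δ * v (Sum.inl j) else 0)) = δ * v (Sum.inl i) := by
    intro i; rw [Finset.sum_ite_eq (Finset.univ) i (fun j => δ * v (Sum.inl j))]; simp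
  simp only [h1]
  have expand : ∀ i : Fin n, v (Sum.inl i) * (δ * v (Sum.inl i) + w i * v (Sum.inr ()))
      = δ * v (Sum.inl i) ^ 2 + (w i * v (Sum.inl i)) * v (Sum.inr ()) := fun i => by ring
  rw [Finset.sum_congr rfl fun i _ => expand i]
  rw [Finset.sum_add_distrib, ← Finset.mul_sum, ← Finset.sum_mul]
  ring

lemma arrow_psd {w : Fin n → ℝ} {δ : ℝ} (hδ : 0 < δ) :
    (Arrow w δ).PosSemidef ↔ (∑ i, w i ^ 2) ≤ δ ^ 2 := by
  constructor
  · intro h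
    have h2 := psd_nonneg h (Sum.elim w (fun _ => -δ))
    rw [arrow_form] at h2
    simp only [Sum.elim_inl, Sum.elim_inr] at h2
    have hsq : (∑ x, w x * w x) = ∑ x, w x ^ 2 := by
      refine Finset.sum_congr rfl fun x _ => (sq (w x)).symm ▸ rfl
    rw [hsq] at h2
    nlinarith [h2, hδ]
  · intro hw
    rw [isSymm_posSemidef_iff (arrow_isSymm w δ)]
    intro v
    rw [arrow_form]
    have hp : (0:ℝ) ≤ ∑ i, v (Sum.inl i) ^ 2 := Finset.sum_nonneg fun i _ => sq_nonneg _
    have hq : (0:ℝ) ≤ ∑ i, w i ^ 2 := Finset.sum_nonneg fun i _ => sq_nonneg _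
    have cs := Finset.sum_mul_sq_le_sq_mul_sq Finset.univ w (fun i => v (Sum.inl i))
    have key : (∑ i, w i * v (Sum.inl i)) ^ 2 ≤ δ ^ 2 * ∑ i, v (Sum.inl i) ^ 2 :=
      le_trans cs (mul_le_mul_of_nonneg_right hw hp)
    nlinarith [key, sq_nonneg ((∑ i, w i * v (Sum.inl i)) + δ * v (Sum.inr ())), hδ,
      mul_pos hδ hδ, sq_nonneg (v (Sum.inr ()))]

lemma rep_closedBall (c : Rn n) {δ : ℝ} (hδ : 0 < δ) : Rep (closedBall c δ) := by
  classical
  refine ⟨Fin 0, Fin n ⊕ Unit, inferInstance, inferInstance,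
    Arrow (fun i => -c i) δ, fun i => Arrow (Pi.single i 1) 0, fun _ => 0,
    arrow_isSymm _ _, fun i => arrow_isSymm _ _, fun j => Matrix.isSymm_zero, ?_⟩
  have key : ∀ (x : Rn n) (u : Fin 0 → ℝ),
      (Arrow (fun i => -c i) δ + ∑ i, x i • Arrow (Pi.single i 1) 0 +
        ∑ j, u j • (0 : Matrix (Fin n ⊕ Unit) (Fin n ⊕ Unit) ℝ))
      = Arrow (fun i => x i - c i) δ := by
    intro x u
    rw [show (∑ j, u j • (0 : Matrix (Fin n ⊕ Unit) (Fin n ⊕ Unit) ℝ)) = 0 by simp, add_zero]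
    ext s t
    rcases s with i | _ <;> rcases t with j | _ <;>
      simp [Arrow, Matrix.sum_apply, Matrix.smul_apply, Pi.single_apply, mul_ite,
        Finset.sum_ite_eq, smul_eq_mul, neg_add_eq_sub]
  have hdist : ∀ x : Rn n, dist x c = Real.sqrt (∑ i, (x i - c i) ^ 2) := by
    intro x
    rw [EuclideanSpace.dist_eq]
    congr 1
    exact Finset.sum_congr rfl fun i _ => by rw [Real.dist_eq, sq_abs]
  ext x
  simp only [mem_closedBall, mem_setOf_eq]
  constructor
  · intro hx
    refine ⟨fun _ => 0, ?_⟩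
    rw [key]
    refine (arrow_psd hδ).mpr ?_
    rw [hdist] at hx
    have hnn : (0:ℝ) ≤ ∑ i, (x i - c i) ^ 2 := Finset.sum_nonneg fun i _ => sq_nonneg _
    calc (∑ i, (x i - c i) ^ 2) = Real.sqrt (∑ i, (x i - c i) ^ 2) ^ 2 :=
          (Real.sq_sqrt hnn).symm
      _ ≤ δ ^ 2 := pow_le_pow_left₀ (Real.sqrt_nonneg _) hx 2
  · rintro ⟨u, hu⟩
    rw [key] at hu
    have hsum := (arrow_psd hδ).mp hu
    rw [hdist]
    calc Real.sqrt (∑ i, (x i - c i) ^ 2) ≤ Real.sqrt (δ ^ 2) := Real.sqrt_le_sqrt hsum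
      _ = δ := Real.sqrt_sq hδ.le


lemma recession {E : Set (Rn n)} {U D : Type} [Fintype U] [Fintype D]
    {A₀ : Matrix D D ℝ} {A : Fin n → Matrix D D ℝ} {B : U → Matrix D D ℝ}
    (hEe : E = {x : Rn n | ∃ u : U → ℝ, (A₀ + ∑ i, x i • A i + ∑ j, u j • B j).PosSemidef})
    (hne : E.Nonempty) (hbd : Bornology.IsBounded E)
    {y : Fin n → ℝ} {w : U → ℝ}
    (h : (∑ i, y i • A i + ∑ j, w j • B j).PosSemidef) : ∀ i, y i = 0 := by
  obtain ⟨x₀, hx₀⟩ := hne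
  rw [hEe, mem_setOf_eq] at hx₀
  obtain ⟨u₀, hu₀⟩ := hx₀
  set yv : Rn n := (WithLp.equiv 2 (Fin n → ℝ)).symm y with hyv_def
  have hyvi : ∀ i, yv i = y i := fun i => rfl
  have hmem : ∀ t : ℝ, 0 ≤ t → x₀ + t • yv ∈ E := by
    intro t ht
    rw [hEe, mem_setOf_eq]
    refine ⟨u₀ + t • w, ?_⟩
    have happ : ∀ i, (x₀ + t • yv) i = x₀ i + t * y i := fun i => by
      simp [PiLp.add_apply, PiLp.smul_apply, hyvi]
    have happ2 : ∀ j, (u₀ + t • w) j = u₀ j + t * w j := fun j => by simp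
    simp only [happ, happ2]
    have hmat : A₀ + ∑ i, (x₀ i + t * y i) • A i + ∑ j, (u₀ j + t * w j) • B j
        = (A₀ + ∑ i, x₀ i • A i + ∑ j, u₀ j • B j) +
          t • (∑ i, y i • A i + ∑ j, w j • B j) := by
      simp only [add_smul, Finset.sum_add_distrib, smul_add, Finset.smul_sum, smul_smul]
      abel
    rw [hmat]
    exact hu₀.add (psd_smul h ht)
  obtain ⟨C, hC⟩ := isBounded_iff_forall_norm_le.mp hbd
  by_contra hy
  push_neg at hy
  have hyv : (0:ℝ) < ‖yv‖ := by
    rw [norm_pos_iff]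
    intro h0
    obtain ⟨i, hi⟩ := hy
    apply hi
    rw [← hyvi i, h0]
    simp
  have hx₀n : ‖x₀‖ ≤ C := hC x₀ (by
    have := hmem 0 le_rfl
    simpa using this)
  set t : ℝ := (C + ‖x₀‖ + 1) / ‖yv‖ with ht_def
  have ht : 0 ≤ t := div_nonneg (by linarith [norm_nonneg x₀]) hyv.le
  have hCt := hC _ (hmem t ht)
  have h1 : ‖t • yv‖ ≤ ‖x₀ + t • yv‖ + ‖x₀‖ := by
    have := norm_sub_le (x₀ + t • yv) x₀
    simpa using this
  have h2 : ‖t • yv‖ = t * ‖yv‖ := by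
    rw [norm_smul, Real.norm_eq_abs, abs_of_nonneg ht]
  have h3 : t * ‖yv‖ = C + ‖x₀‖ + 1 := by
    rw [ht_def, div_mul_cancel₀ _ hyv.ne']
  linarith [h1, hCt]

lemma isCompact_convexJoin {A B : Set (Rn n)} (hA : IsCompact A) (hB : IsCompact B) :
    IsCompact (convexJoin ℝ A B) := by
  have heq : convexJoin ℝ A B =
      (fun p : ℝ × Rn n × Rn n => p.1 • p.2.1 + (1 - p.1) • p.2.2) ''
        (Icc (0:ℝ) 1 ×ˢ A ×ˢ B) := by
    ext z
    constructor
    · intro hz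
      obtain ⟨a, ha, b, hb, hseg⟩ := mem_convexJoin.mp hz
      obtain ⟨p, q, hp, hq, hpq, hzeq⟩ := hseg
      refine ⟨(p, a, b), ⟨⟨hp, by linarith⟩, ha, hb⟩, ?_⟩
      simp only
      rw [show 1 - p = q by linarith]
      exact hzeq
    · rintro ⟨⟨p, a, b⟩, ⟨⟨hp0, hp1⟩, ha, hb⟩, rfl⟩
      exact mem_convexJoin.mpr ⟨a, ha, b, hb, p, 1 - p, hp0, by linarith, by ring, rfl⟩
  rw [heq]
  exact ((isCompact_Icc.prod (hA.prod hB)).image (by fun_prop))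


section Mk

variable {D₁ D₂ : Type} [Fintype D₁] [Fintype D₂]
set_option linter.unusedSectionVars false

/-- Block-diagonal matrix `diag(M, N, a, b)`. -/
def mk4 (M : Matrix D₁ D₁ ℝ) (N : Matrix D₂ D₂ ℝ) (a b : ℝ) :
    Matrix ((D₁ ⊕ D₂) ⊕ (Unit ⊕ Unit)) ((D₁ ⊕ D₂) ⊕ (Unit ⊕ Unit)) ℝ :=
  fromBlocks (fromBlocks M 0 0 N) 0 0
    (fromBlocks (Matrix.diagonal fun _ : Unit => a) 0 0 (Matrix.diagonal fun _ : Unit => b))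

lemma mk4_add (M M' : Matrix D₁ D₁ ℝ) (N N' : Matrix D₂ D₂ ℝ) (a a' b b' : ℝ) :
    mk4 M N a b + mk4 M' N' a' b' = mk4 (M + M') (N + N') (a + a') (b + b') := by
  unfold mk4
  rw [bdiag_add, bdiag_add, bdiag_add, Matrix.diagonal_add, Matrix.diagonal_add]

lemma mk4_smul (c : ℝ) (M : Matrix D₁ D₁ ℝ) (N : Matrix D₂ D₂ ℝ) (a b : ℝ) :
    c • mk4 M N a b = mk4 (c • M) (c • N) (c * a) (c * b) := by
  unfold mk4
  rw [bdiag_smul, bdiag_smul, bdiag_smul,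
    show c • (Matrix.diagonal fun _ : Unit => a) = Matrix.diagonal fun _ : Unit => c * a by
      ext i j; simp [Matrix.diagonal_apply, Matrix.smul_apply],
    show c • (Matrix.diagonal fun _ : Unit => b) = Matrix.diagonal fun _ : Unit => c * b by
      ext i j; simp [Matrix.diagonal_apply, Matrix.smul_apply]]

lemma mk4_zero : (mk4 0 0 0 0 : Matrix ((D₁ ⊕ D₂) ⊕ (Unit ⊕ Unit)) _ ℝ) = 0 := by
  unfold mk4
  rw [show (Matrix.diagonal fun _ : Unit => (0:ℝ)) = 0 from Matrix.diagonal_zero,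
    Matrix.fromBlocks_zero, Matrix.fromBlocks_zero, Matrix.fromBlocks_zero]

lemma mk4_sum {ι : Type*} (s : Finset ι) (f : ι → Matrix D₁ D₁ ℝ) (g : ι → Matrix D₂ D₂ ℝ)
    (a b : ι → ℝ) :
    ∑ i ∈ s, mk4 (f i) (g i) (a i) (b i)
      = mk4 (∑ i ∈ s, f i) (∑ i ∈ s, g i) (∑ i ∈ s, a i) (∑ i ∈ s, b i) := by
  classical
  induction s using Finset.induction_on with
  | empty => simp [mk4_zero]
  | insert _ _ ha ih =>
      rw [Finset.sum_insert ha, Finset.sum_insert ha, Finset.sum_insert ha,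
        Finset.sum_insert ha, Finset.sum_insert ha, ih, mk4_add]

lemma mk4_psd {M : Matrix D₁ D₁ ℝ} {N : Matrix D₂ D₂ ℝ} {a b : ℝ} :
    (mk4 M N a b).PosSemidef ↔ M.PosSemidef ∧ N.PosSemidef ∧ 0 ≤ a ∧ 0 ≤ b := by
  unfold mk4
  rw [bdiag_psd, bdiag_psd, bdiag_psd, Matrix.posSemidef_diagonal_iff,
    Matrix.posSemidef_diagonal_iff]
  simp [and_assoc]

lemma mk4_congr {M M' : Matrix D₁ D₁ ℝ} {N N' : Matrix D₂ D₂ ℝ} {a a' b b' : ℝ}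
    (h1 : M = M') (h2 : N = N') (h3 : a = a') (h4 : b = b') :
    mk4 M N a b = mk4 M' N' a' b' := by
  subst h1; subst h2; subst h3; subst h4; rfl

lemma mk4_isSymm {M : Matrix D₁ D₁ ℝ} {N : Matrix D₂ D₂ ℝ} {a b : ℝ}
    (hM : M.IsSymm) (hN : N.IsSymm) : (mk4 M N a b).IsSymm :=
  bdiag_isSymm (bdiag_isSymm hM hN)
    (bdiag_isSymm (Matrix.isSymm_diagonal _) (Matrix.isSymm_diagonal _))

end Mk

lemma rep_convexHull_union {A B : Set (Rn n)} (hAr : Rep A) (hBr : Rep B)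
    (hAne : A.Nonempty) (hBne : B.Nonempty) (hAc : IsCompact A) (hBc : IsCompact B)
    (hAx : Convex ℝ A) (hBx : Convex ℝ B) : Rep (convexHull ℝ (A ∪ B)) := by
  classical
  obtain ⟨U₁, D₁, _, _, P₀, P, Q, hP₀, hP, hQ, hAe⟩ := hAr
  obtain ⟨U₂, D₂, _, _, R₀, R, T, hR₀, hR, hT, hBe⟩ := hBr
  refine ⟨(Unit ⊕ Fin n) ⊕ (U₁ ⊕ U₂), (D₁ ⊕ D₂) ⊕ (Unit ⊕ Unit), inferInstance, inferInstance,
    mk4 0 R₀ 0 1, fun i => mk4 0 (R i) 0 0,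
    Sum.elim (Sum.elim (fun _ => mk4 P₀ (-R₀) 1 (-1)) (fun i => mk4 (P i) (-(R i)) 0 0))
      (Sum.elim (fun j => mk4 (Q j) 0 0 0) (fun j => mk4 0 (T j) 0 0)),
    mk4_isSymm Matrix.isSymm_zero hR₀, fun i => mk4_isSymm Matrix.isSymm_zero (hR i), ?_, ?_⟩
  · rintro ((j | i) | (j | j))
    · exact mk4_isSymm hP₀ hR₀.neg
    · exact mk4_isSymm (hP i) (hR i).neg
    · exact mk4_isSymm (hQ j) Matrix.isSymm_zero
    · exact mk4_isSymm Matrix.isSymm_zero (hT j)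
  have key : ∀ (x : Rn n) (u : (Unit ⊕ Fin n) ⊕ (U₁ ⊕ U₂) → ℝ),
      (mk4 0 R₀ 0 1 + ∑ i, x i • mk4 0 (R i) 0 0 +
        ∑ j, u j • Sum.elim
          (Sum.elim (fun _ => mk4 P₀ (-R₀) 1 (-1)) (fun i => mk4 (P i) (-(R i)) 0 0))
          (Sum.elim (fun j => mk4 (Q j) 0 0 0) (fun j => mk4 0 (T j) 0 0)) j)
      = mk4
          (u (Sum.inl (Sum.inl ())) • P₀ + ∑ i, u (Sum.inl (Sum.inr i)) • P i +
            ∑ j, u (Sum.inr (Sum.inl j)) • Q j)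
          ((1 - u (Sum.inl (Sum.inl ()))) • R₀ +
            ∑ i, (x i - u (Sum.inl (Sum.inr i))) • R i + ∑ j, u (Sum.inr (Sum.inr j)) • T j)
          (u (Sum.inl (Sum.inl ()))) (1 - u (Sum.inl (Sum.inl ()))) := by
    intro x u
    simp only [Fintype.sum_sum_type, Sum.elim_inl, Sum.elim_inr, Finset.univ_unique,
      Finset.sum_singleton, mk4_smul, smul_zero, mul_zero, mul_one, mul_neg,
      show (default : Unit) = () from rfl]
    rw [mk4_sum Finset.univ (fun i => (0 : Matrix D₁ D₁ ℝ)) (fun i => x i • R i)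
        (fun _ => (0:ℝ)) (fun _ => (0:ℝ)),
      mk4_sum Finset.univ (fun i => u (Sum.inl (Sum.inr i)) • P i)
        (fun i => u (Sum.inl (Sum.inr i)) • -R i) (fun _ => (0:ℝ)) (fun _ => (0:ℝ)),
      mk4_sum Finset.univ (fun j => u (Sum.inr (Sum.inl j)) • Q j)
        (fun j => (0 : Matrix D₂ D₂ ℝ)) (fun _ => (0:ℝ)) (fun _ => (0:ℝ)),
      mk4_sum Finset.univ (fun j => (0 : Matrix D₁ D₁ ℝ))
        (fun j => u (Sum.inr (Sum.inr j)) • T j) (fun _ => (0:ℝ)) (fun _ => (0:ℝ))]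
    simp only [mk4_add, Finset.sum_const_zero, add_zero, zero_add]
    apply mk4_congr
    · abel
    · simp only [neg_one_smul, smul_neg, sub_smul, one_smul, Finset.sum_sub_distrib,
        Finset.sum_neg_distrib]
      abel
    · rfl
    · ring
  rw [Convex.convexHull_union hAx hBx hAne hBne]
  ext x
  simp only [mem_setOf_eq]
  constructor
  · intro hx
    obtain ⟨a, ha, b, hb, hseg⟩ := mem_convexJoin.mp hx
    obtain ⟨p, q, hp, hq, hpq, hzeq⟩ := hseg
    rw [hAe, mem_setOf_eq] at ha
    rw [hBe, mem_setOf_eq] at hb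
    obtain ⟨u₁, hu₁⟩ := ha
    obtain ⟨u₂, hu₂⟩ := hb
    refine ⟨Sum.elim (Sum.elim (fun _ => p) (fun i => p * a i))
      (Sum.elim (fun j => p * u₁ j) (fun j => q * u₂ j)), ?_⟩
    rw [key]
    simp only [Sum.elim_inl, Sum.elim_inr]
    have hxi : ∀ i, x i = p * a i + q * b i := by
      intro i
      rw [← hzeq]
      simp [PiLp.add_apply, PiLp.smul_apply]
    refine mk4_psd.mpr ⟨?_, ?_, hp, by linarith⟩
    · have : p • P₀ + ∑ i, (p * a i) • P i + ∑ j, (p * u₁ j) • Q j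
          = p • (P₀ + ∑ i, a i • P i + ∑ j, u₁ j • Q j) := by
        simp only [smul_add, Finset.smul_sum, smul_smul]
      rw [this]
      exact psd_smul hu₁ hp
    · have : (1 - p) • R₀ + ∑ i, (x i - p * a i) • R i + ∑ j, (q * u₂ j) • T j
          = q • (R₀ + ∑ i, b i • R i + ∑ j, u₂ j • T j) := by
        rw [show (1:ℝ) - p = q by linarith]
        simp only [smul_add, Finset.smul_sum, smul_smul]
        congr 1
        congr 1
        refine Finset.sum_congr rfl fun i _ => ?_
        rw [show x i - p * a i = q * b i from by rw [hxi i]; ring]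
      rw [this]
      exact psd_smul hu₂ hq
  · rintro ⟨u, hu⟩
    rw [key] at hu
    obtain ⟨h₁, h₂, hl0, hl1⟩ := mk4_psd.mp hu
    rcases eq_or_lt_of_le hl0 with h0 | hpos
    · -- lam = 0 : x ∈ B
      rw [← h0, zero_smul, zero_add] at h₁
      have hy0 : ∀ i, u (Sum.inl (Sum.inr i)) = 0 :=
        recession hAe hAne hAc.isBounded h₁
      rw [← h0, sub_zero, one_smul] at h₂
      simp only [hy0, sub_zero] at h₂
      have hxB : x ∈ B := by
        rw [hBe, mem_setOf_eq]
        exact ⟨fun j => u (Sum.inr (Sum.inr j)), h₂⟩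
      exact subset_convexJoin_right hAne hxB
    · rcases eq_or_lt_of_le hl1 with h1 | hlt1
      · -- lam = 1 : x ∈ A
        have hl1' : u (Sum.inl (Sum.inl ())) = 1 := by linarith
        rw [← h1, zero_smul, zero_add] at h₂
        have hy0 : ∀ i, x i - u (Sum.inl (Sum.inr i)) = 0 :=
          recession hBe hBne hBc.isBounded h₂
        have hyx : ∀ i, u (Sum.inl (Sum.inr i)) = x i := by
          intro i; have := hy0 i; linarith
        rw [hl1', one_smul] at h₁
        simp only [hyx] at h₁
        have hxA : x ∈ A := by
          rw [hAe, mem_setOf_eq]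
          exact ⟨fun j => u (Sum.inr (Sum.inl j)), h₁⟩
        exact subset_convexJoin_left hBne hxA
      · -- 0 < lam < 1
        set lam := u (Sum.inl (Sum.inl ())) with hlam_def
        have ha : (WithLp.equiv 2 (Fin n → ℝ)).symm
            (fun i => u (Sum.inl (Sum.inr i)) / lam) ∈ A := by
          rw [hAe, mem_setOf_eq]
          refine ⟨fun j => u (Sum.inr (Sum.inl j)) / lam, ?_⟩
          have happ : ∀ i, ((WithLp.equiv 2 (Fin n → ℝ)).symm
              (fun i => u (Sum.inl (Sum.inr i)) / lam)) i
              = u (Sum.inl (Sum.inr i)) / lam := fun i => rfl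
          simp only [happ]
          have : P₀ + ∑ i, (u (Sum.inl (Sum.inr i)) / lam) • P i +
              ∑ j, (u (Sum.inr (Sum.inl j)) / lam) • Q j
              = lam⁻¹ • (lam • P₀ + ∑ i, u (Sum.inl (Sum.inr i)) • P i +
                ∑ j, u (Sum.inr (Sum.inl j)) • Q j) := by
            simp only [smul_add, Finset.smul_sum, smul_smul, inv_mul_cancel₀ hpos.ne',
              one_smul, div_eq_inv_mul]
          rw [this]
          exact psd_smul h₁ (inv_nonneg.mpr hpos.le)
        have hb : (WithLp.equiv 2 (Fin n → ℝ)).symm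
            (fun i => (x i - u (Sum.inl (Sum.inr i))) / (1 - lam)) ∈ B := by
          rw [hBe, mem_setOf_eq]
          refine ⟨fun j => u (Sum.inr (Sum.inr j)) / (1 - lam), ?_⟩
          have happ : ∀ i, ((WithLp.equiv 2 (Fin n → ℝ)).symm
              (fun i => (x i - u (Sum.inl (Sum.inr i))) / (1 - lam))) i
              = (x i - u (Sum.inl (Sum.inr i))) / (1 - lam) := fun i => rfl
          simp only [happ]
          have : R₀ + ∑ i, ((x i - u (Sum.inl (Sum.inr i))) / (1 - lam)) • R i +
              ∑ j, (u (Sum.inr (Sum.inr j)) / (1 - lam)) • T j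
              = (1 - lam)⁻¹ • ((1 - lam) • R₀ +
                ∑ i, (x i - u (Sum.inl (Sum.inr i))) • R i +
                ∑ j, u (Sum.inr (Sum.inr j)) • T j) := by
            simp only [smul_add, Finset.smul_sum, smul_smul, inv_mul_cancel₀ hlt1.ne',
              one_smul, div_eq_inv_mul]
          rw [this]
          exact psd_smul h₂ (inv_nonneg.mpr hlt1.le)
        refine mem_convexJoin.mpr ⟨_, ha, _, hb, lam, 1 - lam, hpos.le, hlt1.le, by ring, ?_⟩
        ext i
        have h1i : (lam • (WithLp.equiv 2 (Fin n → ℝ)).symm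
            (fun i => u (Sum.inl (Sum.inr i)) / lam) +
            (1 - lam) • (WithLp.equiv 2 (Fin n → ℝ)).symm
            (fun i => (x i - u (Sum.inl (Sum.inr i))) / (1 - lam))) i
            = lam * (u (Sum.inl (Sum.inr i)) / lam) +
              (1 - lam) * ((x i - u (Sum.inl (Sum.inr i))) / (1 - lam)) := by
          simp [PiLp.add_apply, PiLp.smul_apply]
        rw [h1i]
        field_simp
        ring

lemma extremePoints_subset_frontier {S : Set (Rn n)} (hS : IsClosed S)
    (hfr : frontier S ≠ ∅) : S.extremePoints ℝ ⊆ frontier S := by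
  intro x hx
  by_contra hxf
  have hxS := hx.1
  have hxi : x ∈ interior S := by
    by_contra hxi
    exact hxf (by rw [hS.frontier_eq]; exact ⟨hxS, hxi⟩)
  have hsing : S ⊆ {x} := by
    intro y hy
    by_contra hyx
    simp only [mem_singleton_iff] at hyx
    obtain ⟨ε, hε, hball⟩ := Metric.isOpen_iff.mp isOpen_interior x hxi
    have hd0 : 0 < ‖x - y‖ := by
      rw [norm_pos_iff, sub_ne_zero]
      exact fun hc => hyx hc.symm
    set t : ℝ := ε / (2 * ‖x - y‖) with ht_def
    have ht : 0 < t := div_pos hε (by positivity)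
    have hz : x + t • (x - y) ∈ S := by
      apply interior_subset
      apply hball
      rw [mem_ball, dist_eq_norm]
      have : x + t • (x - y) - x = t • (x - y) := by abel
      rw [this, norm_smul, Real.norm_eq_abs, abs_of_nonneg ht.le, ht_def,
        div_mul_eq_mul_div, mul_comm]
      rw [mul_div_assoc]
      calc ‖x - y‖ * (ε / (2 * ‖x - y‖)) = ε / 2 := by field_simp
        _ < ε := by linarith
    have hseg : x ∈ openSegment ℝ y (x + t • (x - y)) := by
      have h1t : (0:ℝ) < 1 + t := by linarith
      refine ⟨t / (1 + t), 1 / (1 + t), div_pos ht h1t, div_pos one_pos h1t, ?_, ?_⟩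
      · field_simp
        ring
      · match_scalars <;> field_simp <;> ring
    obtain ⟨h1, h2⟩ := (mem_extremePoints.mp hx).2 y hy _ hz hseg
    exact hyx h1
  have hSeq : S = {x} := Subset.antisymm hsing (singleton_subset_iff.mpr hxS)
  have hint : interior S = S := by
    refine Subset.antisymm interior_subset fun z hz => ?_
    have hzx : z = x := mem_singleton_iff.mp (hsing hz)
    rw [hzx]
    exact hxi
  exact hfr (isClopen_iff_frontier_eq_empty.mp ⟨hS, hint ▸ isOpen_interior⟩)

lemma rep_hull_biUnion {ι : Type} (b : Finset ι) :
    ∀ T : ι → Set (Rn n),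
      (∀ u ∈ b, (T u).Nonempty ∧ IsCompact (T u) ∧ Convex ℝ (T u) ∧ Rep (T u)) →
      IsCompact (convexHull ℝ (⋃ u ∈ (b : Set ι), T u)) ∧
        Convex ℝ (convexHull ℝ (⋃ u ∈ (b : Set ι), T u)) ∧
        Rep (convexHull ℝ (⋃ u ∈ (b : Set ι), T u)) := by
  classical
  induction b using Finset.induction_on with
  | empty =>
      intro T h
      simp only [Finset.coe_empty, mem_empty_iff_false, iUnion_of_empty, iUnion_empty,
        convexHull_empty]
      exact ⟨isCompact_empty, convex_empty, rep_empty⟩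
  | @insert a s ha ih =>
      intro T h
      obtain ⟨hKc, hKx, hKr⟩ := ih T (fun u hu => h u (Finset.mem_insert_of_mem hu))
      obtain ⟨hane, hac, hax, har⟩ := h a (Finset.mem_insert_self a s)
      have hU : (⋃ u ∈ ((insert a s : Finset ι) : Set ι), T u)
          = T a ∪ ⋃ u ∈ (s : Set ι), T u := by
        simp [Finset.coe_insert, Set.biUnion_insert]
      rw [hU, ← convexHull_convexHull_union_right]
      by_cases hK : (⋃ u ∈ (s : Set ι), T u) = ∅
      · rw [hK]
        simp only [convexHull_empty, union_empty]
        rw [hax.convexHull_eq]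
        exact ⟨hac, hax, har⟩
      · have hKne : (convexHull ℝ (⋃ u ∈ (s : Set ι), T u)).Nonempty :=
          (nonempty_iff_ne_empty.mpr hK).mono (subset_convexHull ℝ _)
        refine ⟨?_, ?_, ?_⟩
        · rw [Convex.convexHull_union hax hKx hane hKne]
          exact isCompact_convexJoin hac hKc
        · rw [Convex.convexHull_union hax hKx hane hKne]
          exact hax.convexJoin hKx
        · exact rep_convexHull_union har hKr hane hKne hac hKc hax hKx

end SDPH

/-- a compact convex set `S` is SDP representable iff for every
`u ∈ ∂S` some `S ∩ B̄(u, δ)` is SDP representable. -/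
theorem isSDPRepresentable_iff_forall_frontier_local {n : ℕ} (S : Set (Rn n))
    (hcpt : IsCompact S) (hconv : Convex ℝ S) :
    IsSDPRepresentable S ↔
      ∀ u ∈ frontier S, ∃ δ > 0, IsSDPRepresentable (S ∩ closedBall u δ) := by
  constructor
  · intro hS u hu
    exact ⟨1, one_pos,
      ((SDPH.rep_of_isSDP hS).inter (SDPH.rep_closedBall u one_pos)).isSDP⟩
  · intro h
    by_cases hfr : frontier S = ∅
    · rcases isClopen_iff.mp (isClopen_iff_frontier_eq_empty.mpr hfr) with rfl | rfl
      · exact SDPH.rep_empty.isSDP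
      · exact SDPH.rep_univ.isSDP
    · choose! δ hδpos hδrep using h
      have hScl : IsClosed S := hcpt.isClosed
      have hfrS : frontier S ⊆ S := by
        rw [hScl.frontier_eq]; exact diff_subset
      have hfrc : IsCompact (frontier S) :=
        hcpt.of_isClosed_subset isClosed_frontier hfrS
      have hcover : frontier S ⊆ ⋃ u ∈ frontier S, ball u (δ u) := fun u hu =>
        mem_biUnion hu (mem_ball_self (hδpos u hu))
      obtain ⟨b, hbsub, hbfin, hbcov⟩ :=
        hfrc.elim_finite_subcover_image (fun u _ => isOpen_ball) hcover
      classical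
      set bs : Finset (Rn n) := hbfin.toFinset with hbs_def
      set T : Rn n → Set (Rn n) := fun u => S ∩ closedBall u (δ u) with hT_def
      have hub : ∀ u ∈ bs, u ∈ frontier S := fun u hu =>
        hbsub (hbfin.mem_toFinset.mp hu)
      have hprops : ∀ u ∈ bs, (T u).Nonempty ∧ IsCompact (T u) ∧ Convex ℝ (T u) ∧
          SDPH.Rep (T u) := by
        intro u hu
        have huf := hub u hu
        exact ⟨⟨u, hfrS huf, mem_closedBall_self (hδpos u huf).le⟩,
          hcpt.inter_right isClosed_closedBall,
          hconv.inter (convex_closedBall _ _),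
          SDPH.rep_of_isSDP (hδrep u huf)⟩
      obtain ⟨hKc, hKx, hKr⟩ := SDPH.rep_hull_biUnion bs T hprops
      have hSK : S = convexHull ℝ (⋃ u ∈ (bs : Set (Rn n)), T u) := by
        apply Subset.antisymm
        · have hKM := closure_convexHull_extremePoints hcpt hconv
          have hext : S.extremePoints ℝ ⊆ ⋃ u ∈ (bs : Set (Rn n)), T u := by
            intro x hx
            have hxf : x ∈ frontier S :=
              SDPH.extremePoints_subset_frontier hScl hfr hx
            obtain ⟨u, hu, hxu⟩ := mem_iUnion₂.mp (hbcov hxf)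
            refine mem_biUnion (by rwa [Finset.mem_coe, hbfin.mem_toFinset]) ?_
            exact ⟨hfrS hxf, ball_subset_closedBall hxu⟩
          calc S = closure (convexHull ℝ (S.extremePoints ℝ)) := hKM.symm
            _ ⊆ closure (convexHull ℝ (⋃ u ∈ (bs : Set (Rn n)), T u)) :=
                closure_mono (convexHull_mono hext)
            _ = convexHull ℝ (⋃ u ∈ (bs : Set (Rn n)), T u) := hKc.isClosed.closure_eq
        · refine convexHull_min ?_ hconv
          exact iUnion₂_subset fun u hu => inter_subset_left
      rw [hSK]
      exact hKr.isSDP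
end
end

section
/- Let S ⊆ ℝⁿ be a convex set with nonempty interior whose closure satisfies cl(S) = ⋃_{k=1}^m Tₖ, where each Tₖ = { x ∈ ℝⁿ : gᵏ₁(x) ≥ 0, …, gᵏ_{mₖ}(x) ≥ 0 } is defined by real polynomials gᵏᵢ. Let u ∈ ∂cl(S) ∩ ∂Tₖ with gᵏᵢ(u) = 0. If gᵏᵢ is irredundant at u with respect to ∂cl(S) and nonsingular at u (i.e., ∇gᵏᵢ(u) ≠ 0), then gᵏᵢ is quasi-concave at u. -/
open MvPolynomial Metric Set Pointwise Filter

noncomputable section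

section AuxHN

variable {n : ℕ}

lemma continuous_peval' (g : MvPolynomial (Fin n) ℝ) : Continuous (peval g) :=
  (MvPolynomial.continuous_eval g).comp (PiLp.continuous_ofLp 2 fun _ : Fin n => ℝ)

/-- Chain rule for evaluation of a multivariate polynomial along a differentiable curve. -/
lemma hasDerivAt_eval_comp (g : MvPolynomial (Fin n) ℝ) (c : ℝ → Fin n → ℝ)
    (c' : Fin n → ℝ) (t : ℝ) (hc : ∀ i, HasDerivAt (fun s => c s i) (c' i) t) :
    HasDerivAt (fun s => MvPolynomial.eval (c s) g)
      (∑ i, c' i * MvPolynomial.eval (c t) (MvPolynomial.pderiv i g)) t := by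
  classical
  induction g using MvPolynomial.induction_on with
  | C a =>
      simpa [MvPolynomial.pderiv_C] using hasDerivAt_const t a
  | add p q hp hq =>
      simpa [mul_add, Finset.sum_add_distrib] using hp.fun_add hq
  | mul_X p j hp =>
      have h := hp.fun_mul (hc j)
      have hfun : (fun s => MvPolynomial.eval (c s) (p * MvPolynomial.X j))
          = fun s => MvPolynomial.eval (c s) p * c s j := by
        funext s; simp
      rw [hfun]
      refine h.congr_deriv (Eq.symm ?_)
      have hterm : ∀ i' : Fin n, c' i' * MvPolynomial.eval (c t)
          (MvPolynomial.pderiv i' (p * MvPolynomial.X j))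
          = c' i' * MvPolynomial.eval (c t) (MvPolynomial.pderiv i' p) * c t j
            + (if j = i' then c' i' * MvPolynomial.eval (c t) p else 0) := by
        intro i'
        rw [MvPolynomial.pderiv_mul, map_add, map_mul, map_mul, MvPolynomial.eval_X,
          MvPolynomial.pderiv_X, Pi.single_apply]
        split <;> simp <;> ring
      rw [Finset.sum_congr rfl fun i' _ => hterm i', Finset.sum_add_distrib,
        Finset.sum_ite_eq Finset.univ j (fun i' => c' i' * MvPolynomial.eval (c t) p),
        ← Finset.sum_mul]
      simp [mul_comm]

/-- Second-derivative test: positivity near a critical point. -/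
lemma pos_near_of_deriv2 (F F' F'' : ℝ → ℝ)
    (hF : ∀ t, HasDerivAt F (F' t) t) (hF' : ∀ t, HasDerivAt F' (F'' t) t)
    (hF'' : Continuous F'') (h0 : F 0 = 0) (h1 : F' 0 = 0) (h2 : 0 < F'' 0) :
    ∃ ε > 0, ∀ t : ℝ, t ≠ 0 → |t| < ε → 0 < F t := by
  obtain ⟨ε, εpos, hε⟩ : ∃ ε > 0, ∀ t : ℝ, |t| < ε → 0 < F'' t := by
    have hop : IsOpen {t : ℝ | 0 < F'' t} := isOpen_lt continuous_const hF''
    obtain ⟨ε, εpos, hball⟩ := Metric.isOpen_iff.mp hop 0 h2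
    exact ⟨ε, εpos, fun t ht => hball (by simpa [Real.dist_eq] using ht)⟩
  have hmono : StrictMonoOn F' (Set.Ioo (-ε) ε) := by
    apply strictMonoOn_of_hasDerivWithinAt_pos (convex_Ioo _ _)
      (fun t _ => (hF' t).continuousAt.continuousWithinAt)
      (fun t _ => (hF' t).hasDerivWithinAt)
    intro t ht
    rw [interior_Ioo] at ht
    exact hε t (abs_lt.mpr ht)
  have h0mem : (0:ℝ) ∈ Set.Ioo (-ε) ε := ⟨by linarith, εpos⟩
  have hup : StrictMonoOn F (Set.Ico 0 ε) := by
    apply strictMonoOn_of_hasDerivWithinAt_pos (convex_Ico _ _)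
      (fun t _ => (hF t).continuousAt.continuousWithinAt)
      (fun t _ => (hF t).hasDerivWithinAt)
    intro t ht
    rw [interior_Ico] at ht
    have : F' 0 < F' t := hmono h0mem ⟨by linarith [ht.1], ht.2⟩ ht.1
    linarith [h1]
  have hdown : StrictAntiOn F (Set.Ioc (-ε) 0) := by
    apply strictAntiOn_of_hasDerivWithinAt_neg (convex_Ioc _ _)
      (fun t _ => (hF t).continuousAt.continuousWithinAt)
      (fun t _ => (hF t).hasDerivWithinAt)
    intro t ht
    rw [interior_Ioc] at ht
    have : F' t < F' 0 := hmono ⟨ht.1, by linarith [ht.2, εpos]⟩ h0mem ht.2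
    linarith [h1]
  refine ⟨ε, εpos, fun t ht htε => ?_⟩
  rcases ht.lt_or_gt with hneg | hposi
  · have := hdown ⟨(abs_lt.mp htε).1, le_of_lt hneg⟩ ⟨by linarith, le_refl 0⟩ hneg
    rw [h0] at this; exact this
  · have := hup ⟨le_refl 0, εpos⟩ ⟨le_of_lt hposi, (abs_lt.mp htε).2⟩ hposi
    rw [h0] at this; exact this

lemma sum_sq_pos_of_ne {a : Fin n → ℝ} (ha : a ≠ 0) : 0 < ∑ i', a i' * a i' := by
  obtain ⟨i0, hi0⟩ : ∃ i0, a i0 ≠ 0 := by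
    by_contra h; push_neg at h; exact ha (funext h)
  exact Finset.sum_pos' (fun _ _ => mul_self_nonneg _)
    ⟨i0, Finset.mem_univ _, mul_self_pos.mpr hi0⟩

set_option maxHeartbeats 2000000 in
/-- Key feasibility + support inequality along a parabolic curve. -/
lemma support_ineq {M : ℕ} (G : Fin M → MvPolynomial (Fin n) ℝ) (i : Fin M) (w : Rn n)
    (hw0 : peval (G i) w = 0) (hpos : ∀ j, j ≠ i → 0 < peval (G j) w)
    (f : Rn n →L[ℝ] ℝ) (hsupp : ∀ x : Rn n, (∀ j, 0 ≤ peval (G j) x) → f x ≤ f w)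
    (v z : Fin n → ℝ)
    (hv : ∑ i', pgrad (G i) w i' * v i' = 0)
    (hc0 : 0 < 2 * (∑ i', pgrad (G i) w i' * z i')
      + ∑ i', ∑ j', v i' * phess (G i) w i' j' * v j') :
    ∃ ε > 0, ∀ t : ℝ, t ≠ 0 → |t| < ε →
      t * f ((WithLp.equiv 2 (∀ _ : Fin n, ℝ)).symm v)
        + t ^ 2 * f ((WithLp.equiv 2 (∀ _ : Fin n, ℝ)).symm z) ≤ 0 := by
  classical
  set vE := (WithLp.equiv 2 (∀ _ : Fin n, ℝ)).symm v with hvE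
  set zE := (WithLp.equiv 2 (∀ _ : Fin n, ℝ)).symm z with hzE
  set cfun : ℝ → Fin n → ℝ := fun t i' => w i' + t * v i' + t ^ 2 * z i' with hcfun
  set X : ℝ → Rn n := fun t => w + t • vE + t ^ 2 • zE with hXdef
  have hXcoord : ∀ (t : ℝ) (i' : Fin n), X t i' = cfun t i' := by
    intro t i'
    simp [hXdef, hcfun, hvE, hzE, PiLp.add_apply, PiLp.smul_apply,
      WithLp.equiv_symm_apply, PiLp.toLp_apply, smul_eq_mul]
  have hpe : ∀ (p : MvPolynomial (Fin n) ℝ) (t : ℝ),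
      peval p (X t) = MvPolynomial.eval (cfun t) p := by
    intro p t
    show MvPolynomial.eval (fun i' => X t i') p = _
    rw [show (fun i' => X t i') = cfun t from funext (hXcoord t)]
  have hcfun0 : cfun 0 = fun i' => w i' := by funext i'; simp [hcfun]
  have hcurve : ∀ (t : ℝ) (i' : Fin n),
      HasDerivAt (fun s : ℝ => cfun s i') (v i' + 2 * t * z i') t := by
    intro t i'
    have h1 : HasDerivAt (fun s : ℝ => s * v i') (v i') t := by
      simpa using (hasDerivAt_id t).mul_const (v i')
    have h2 : HasDerivAt (fun s : ℝ => s ^ 2 * z i') (2 * t * z i') t := by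
      simpa [mul_assoc] using (hasDerivAt_pow 2 t).mul_const (z i')
    simpa [hcfun] using ((hasDerivAt_const t (w i')).fun_add h1).fun_add h2
  have hcont : ∀ p : MvPolynomial (Fin n) ℝ,
      Continuous fun t : ℝ => MvPolynomial.eval (cfun t) p := by
    intro p
    refine (MvPolynomial.continuous_eval p).comp (continuous_pi fun i' => ?_)
    simp only [hcfun]
    continuity
  set F : ℝ → ℝ := fun t => MvPolynomial.eval (cfun t) (G i) with hF
  set F' : ℝ → ℝ := fun t => ∑ i', (v i' + 2 * t * z i')
      * MvPolynomial.eval (cfun t) (MvPolynomial.pderiv i' (G i)) with hF'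
  set F'' : ℝ → ℝ := fun t => ∑ i', (2 * z i'
        * MvPolynomial.eval (cfun t) (MvPolynomial.pderiv i' (G i))
      + (v i' + 2 * t * z i') * ∑ j', (v j' + 2 * t * z j')
        * MvPolynomial.eval (cfun t)
            (MvPolynomial.pderiv j' (MvPolynomial.pderiv i' (G i)))) with hF''
  have hDF : ∀ t, HasDerivAt F (F' t) t := fun t =>
    hasDerivAt_eval_comp (G i) cfun _ t (hcurve t)
  have hDF' : ∀ t, HasDerivAt F' (F'' t) t := by
    intro t
    apply HasDerivAt.fun_sum
    intro i' _
    have h1 : HasDerivAt (fun s : ℝ => v i' + 2 * s * z i') (2 * z i') t := by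
      have : HasDerivAt (fun s : ℝ => 2 * s * z i') (2 * z i') t := by
        simpa [mul_assoc, mul_comm] using
          ((hasDerivAt_id t).const_mul 2).mul_const (z i')
      simpa using (hasDerivAt_const t (v i')).fun_add this
    have h2 := hasDerivAt_eval_comp (MvPolynomial.pderiv i' (G i)) cfun _ t (hcurve t)
    simpa [mul_comm] using h1.fun_mul h2
  have hCF'' : Continuous F'' := by
    apply continuous_finset_sum
    intro i' _
    apply Continuous.add
    · exact continuous_const.mul (hcont _)
    · refine Continuous.mul ?_ (continuous_finset_sum _ fun j' _ => Continuous.mul ?_ (hcont _))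
      · exact continuous_const.add ((continuous_const.mul continuous_id).mul continuous_const)
      · exact continuous_const.add ((continuous_const.mul continuous_id).mul continuous_const)
  have hF0 : F 0 = 0 := by
    rw [hF]; simp only [hcfun0]; exact hw0
  have hF'0 : F' 0 = 0 := by
    have heq : F' 0 = ∑ i', pgrad (G i) w i' * v i' := by
      rw [hF']
      simp only [hcfun0]
      apply Finset.sum_congr rfl
      intro i' _
      simp only [pgrad]
      ring
    rw [heq, hv]
  have hF''0 : 0 < F'' 0 := by
    have heq : F'' 0 = 2 * (∑ i', pgrad (G i) w i' * z i')
        + ∑ i', ∑ j', v i' * phess (G i) w i' j' * v j' := by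
      rw [hF'']
      simp only [hcfun0]
      rw [Finset.sum_add_distrib]
      congr 1
      · rw [Finset.mul_sum]
        apply Finset.sum_congr rfl
        intro i' _
        simp [pgrad]; ring
      · rw [Finset.sum_comm]
        apply Finset.sum_congr rfl
        intro i' _
        rw [Finset.mul_sum]
        apply Finset.sum_congr rfl
        intro j' _
        simp [phess, Matrix.of_apply, pgrad]
        ring
    rw [heq]; exact hc0
  obtain ⟨ε₁, hε₁pos, hε₁⟩ := pos_near_of_deriv2 F F' F'' hDF hDF' hCF'' hF0 hF'0 hF''0
  have hev : ∀ᶠ t in nhds (0:ℝ), ∀ j, j ≠ i → 0 < peval (G j) (X t) := by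
    rw [eventually_all]
    intro j
    by_cases hj : j = i
    · exact Filter.Eventually.of_forall fun t h => absurd hj h
    · have hj0 : 0 < peval (G j) w := hpos j hj
      have hc : ContinuousAt (fun t : ℝ => MvPolynomial.eval (cfun t) (G j)) 0 :=
        (hcont (G j)).continuousAt
      have hval : MvPolynomial.eval (cfun 0) (G j) = peval (G j) w := by
        rw [hcfun0]; rfl
      have := hc.preimage_mem_nhds (Ioi_mem_nhds (by rw [hval]; exact hj0))
      filter_upwards [this] with t ht _
      rw [hpe]
      exact ht
  obtain ⟨ε₂, hε₂pos, hε₂⟩ := Metric.eventually_nhds_iff.mp hev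
  refine ⟨min ε₁ ε₂, lt_min hε₁pos hε₂pos, fun t ht htε => ?_⟩
  have hfeas : ∀ j, 0 ≤ peval (G j) (X t) := by
    intro j
    by_cases hj : j = i
    · subst hj
      rw [hpe]
      exact (hε₁ t ht (lt_of_lt_of_le htε (min_le_left _ _))).le
    · exact (hε₂ (show dist t 0 < ε₂ by
        simpa [Real.dist_eq] using lt_of_lt_of_le htε (min_le_right _ _)) j hj).le
  have hle := hsupp (X t) hfeas
  have hfX : f (X t) = f w + t * f vE + t ^ 2 * f zE := by
    rw [hXdef]
    simp [map_add, map_smul, smul_eq_mul]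
  rw [hfX] at hle
  linarith

end AuxHN

section AuxHN2

variable {n : ℕ}

lemma equiv_symm_mul_smul (c : ℝ) (y : Fin n → ℝ) :
    (WithLp.equiv 2 (∀ _ : Fin n, ℝ)).symm (fun i' => c * y i')
      = c • (WithLp.equiv 2 (∀ _ : Fin n, ℝ)).symm y := by
  rw [show (fun i' => c * y i') = c • y from funext fun i' => rfl, WithLp.equiv_symm_apply, WithLp.toLp_smul]

set_option maxHeartbeats 2000000 in
/-- Quasi-concavity at a supported nonsingular boundary point. -/
lemma quasi_at_point {M : ℕ} (G : Fin M → MvPolynomial (Fin n) ℝ) (i : Fin M) (w : Rn n)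
    (hw0 : peval (G i) w = 0) (hpos : ∀ j, j ≠ i → 0 < peval (G j) w)
    (hgrad : pgrad (G i) w ≠ 0)
    (f : Rn n →L[ℝ] ℝ) (hfne : ∃ a, f a < f w)
    (hsupp : ∀ x : Rn n, (∀ j, 0 ≤ peval (G j) x) → f x ≤ f w) :
    ∀ v : Fin n → ℝ, (∑ i', pgrad (G i) w i' * v i' = 0) →
      ∑ i', ∑ j', v i' * phess (G i) w i' j' * v j' ≤ 0 := by
  classical
  set a : Fin n → ℝ := pgrad (G i) w with ha
  set Q : ℝ := ∑ i', a i' * a i' with hQdef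
  have hQ : 0 < Q := sum_sq_pos_of_ne hgrad
  set aE := (WithLp.equiv 2 (∀ _ : Fin n, ℝ)).symm a with haE
  set Hq : (Fin n → ℝ) → ℝ :=
    fun v => ∑ i', ∑ j', v i' * phess (G i) w i' j' * v j' with hHq
  -- Claim A : f vanishes on the orthogonal complement of the gradient
  have claimA : ∀ v : Fin n → ℝ, (∑ i', a i' * v i' = 0) →
      f ((WithLp.equiv 2 (∀ _ : Fin n, ℝ)).symm v) = 0 := by
    intro v hv
    set γ : ℝ := (1 + |Hq v|) / (2 * Q) with hγ
    have hγpos : 0 < γ := by positivity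
    have hzsum : ∑ i', a i' * (γ * a i') = γ * Q := by
      rw [hQdef, Finset.mul_sum]
      exact Finset.sum_congr rfl fun i' _ => by ring
    have hc0 : 0 < 2 * (∑ i', a i' * (γ * a i')) + Hq v := by
      rw [hzsum, hγ]
      have h2γQ : 2 * ((1 + |Hq v|) / (2 * Q) * Q) = 1 + |Hq v| := by
        field_simp
      rw [h2γQ]
      have := neg_abs_le (Hq v)
      linarith
    obtain ⟨ε, εpos, hε⟩ := support_ineq G i w hw0 hpos f hsupp v
      (fun i' => γ * a i') hv hc0
    rw [equiv_symm_mul_smul, map_smul, smul_eq_mul] at hε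
    rw [show f ((WithLp.equiv 2 (∀ _ : Fin n, ℝ)).symm v)
      = f ((WithLp.equiv 2 (∀ _ : Fin n, ℝ)).symm v) from rfl]
    obtain ⟨A, hA⟩ : ∃ A : ℝ, f ((WithLp.equiv 2 (∀ _ : Fin n, ℝ)).symm v) = A := ⟨_, rfl⟩
    obtain ⟨B, hB⟩ : ∃ B : ℝ, γ * f aE = B := ⟨_, rfl⟩
    rw [hA, hB] at hε
    rw [hA]
    have key : ∀ t : ℝ, t ≠ 0 → |t| < ε → t * A + t ^ 2 * B ≤ 0 := hε
    have h1 : A ≤ 0 := by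
      have lim : Tendsto (fun t : ℝ => A + t * B) (nhdsWithin 0 (Set.Ioi 0)) (nhds A) := by
        have hcont : Continuous fun t : ℝ => A + t * B :=
          continuous_const.add (continuous_id.mul continuous_const)
        have h0 : Tendsto (fun t : ℝ => A + t * B) (nhds 0) (nhds A) := by
          simpa using hcont.tendsto 0
        exact h0.mono_left nhdsWithin_le_nhds
      refine le_of_tendsto lim ?_
      filter_upwards [Ioo_mem_nhdsGT εpos] with t htm
      have := key t (ne_of_gt htm.1) (by rw [abs_of_pos htm.1]; exact htm.2)
      nlinarith [htm.1]
    have h2 : 0 ≤ A := by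
      have lim : Tendsto (fun t : ℝ => A + t * B) (nhdsWithin 0 (Set.Iio 0)) (nhds A) := by
        have hcont : Continuous fun t : ℝ => A + t * B :=
          continuous_const.add (continuous_id.mul continuous_const)
        have h0 : Tendsto (fun t : ℝ => A + t * B) (nhds 0) (nhds A) := by
          simpa using hcont.tendsto 0
        exact h0.mono_left nhdsWithin_le_nhds
      refine ge_of_tendsto lim ?_
      filter_upwards [Ioo_mem_nhdsLT (neg_lt_zero.mpr εpos)] with t htm
      have := key t (ne_of_lt htm.2) (by rw [abs_of_neg htm.2]; linarith [htm.1])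
      nlinarith [htm.2]
    linarith
  -- Claim B : f(∇g) ≤ 0
  have claimB : f aE ≤ 0 := by
    have hv0 : ∑ i', a i' * (0 : Fin n → ℝ) i' = 0 := by simp
    have hc0 : 0 < 2 * (∑ i', a i' * a i') + Hq (0 : Fin n → ℝ) := by
      have : Hq (0 : Fin n → ℝ) = 0 := by simp [hHq]
      rw [this]; linarith
    obtain ⟨ε, εpos, hε⟩ := support_ineq G i w hw0 hpos f hsupp 0 a hv0 hc0
    obtain ⟨B, hB⟩ : ∃ B : ℝ, f aE = B := ⟨_, rfl⟩
    have hhalf : 0 < ε / 2 := half_pos εpos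
    have := hε (ε / 2) hhalf.ne' (by rw [abs_of_pos hhalf]; linarith)
    rw [show (WithLp.equiv 2 (∀ _ : Fin n, ℝ)).symm 0 = 0 from rfl, map_zero, hB] at this
    have hsq : 0 < (ε / 2) ^ 2 := by positivity
    rw [hB]
    nlinarith [hsq]
  -- Main argument
  intro v hv
  by_contra hcon
  push_neg at hcon
  have hcon' : 0 < Hq v := hcon
  set β : ℝ := Hq v / (4 * Q) with hβ
  have hβpos : 0 < β := by positivity
  have hzsum : ∑ i', a i' * (-β * a i') = -β * Q := by
    rw [hQdef, Finset.mul_sum]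
    exact Finset.sum_congr rfl fun i' _ => by ring
  have hQne : Q ≠ 0 := ne_of_gt hQ
  have hc0 : 0 < 2 * (∑ i', a i' * (-β * a i')) + Hq v := by
    rw [hzsum, hβ]
    rw [show -(Hq v / (4 * Q)) * Q = -(Hq v / 4) by field_simp]
    linarith
  obtain ⟨ε, εpos, hε⟩ := support_ineq G i w hw0 hpos f hsupp v (fun i' => -β * a i') hv hc0
  rw [equiv_symm_mul_smul, map_smul, smul_eq_mul, claimA v hv] at hε
  obtain ⟨B, hB⟩ : ∃ B : ℝ, f aE = B := ⟨_, rfl⟩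
  rw [hB] at hε
  have hhalf : 0 < ε / 2 := half_pos εpos
  have hineq := hε (ε / 2) hhalf.ne' (by rw [abs_of_pos hhalf]; linarith)
  obtain ⟨b, hb⟩ : ∃ b : ℝ, β = b := ⟨_, rfl⟩
  rw [hb] at hineq hβpos
  have hfa0 : f aE = 0 := by
    have hsq : 0 < (ε / 2) ^ 2 := by positivity
    rw [hB]
    have hle : B ≤ 0 := by rw [← hB]; exact claimB
    have hge : 0 ≤ B := by nlinarith [mul_pos hsq hβpos]
    linarith
  -- f is identically zero : contradiction
  obtain ⟨p, hp⟩ := hfne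
  have hzero : ∀ x : Rn n, f x = 0 := by
    intro x
    set c : ℝ := (∑ i', a i' * x i') / Q with hc
    set v' : Fin n → ℝ := fun i' => x i' - c * a i' with hv'def
    have hv' : ∑ i', a i' * v' i' = 0 := by
      have hsplit : ∑ i', a i' * v' i'
          = (∑ i', a i' * x i') - c * ∑ i', a i' * a i' := by
        rw [Finset.mul_sum, ← Finset.sum_sub_distrib]
        exact Finset.sum_congr rfl fun i' _ => by simp [hv'def]; ring
      rw [hsplit, ← hQdef,
        show c * Q = ∑ i', a i' * x i' from div_mul_cancel₀ _ (ne_of_gt hQ), sub_self]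
    have hfv' := claimA v' hv'
    have hxdecomp : x = c • aE + (WithLp.equiv 2 (∀ _ : Fin n, ℝ)).symm v' := by
      apply (WithLp.equiv 2 (∀ _ : Fin n, ℝ)).injective
      funext i'
      simp [PiLp.add_apply, PiLp.smul_apply, haE,
        WithLp.equiv_symm_apply, PiLp.toLp_apply, smul_eq_mul, hv'def]
    rw [hxdecomp, map_add, map_smul, smul_eq_mul, hfa0, hfv']
    ring
  rw [hzero p, hzero w] at hp
  exact lt_irrefl 0 hp

lemma closure_subset_closure_interior {S : Set (Rn n)} (hconv : Convex ℝ S)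
    (hint : (interior S).Nonempty) : closure S ⊆ closure (interior S) := by
  obtain ⟨y, hy⟩ := hint
  intro x hx
  have hlim : Tendsto
      (fun m : ℕ => (1 - (1:ℝ)/(m+1)) • x + ((1:ℝ)/(m+1)) • y) atTop (nhds x) := by
    have t1 : Tendsto (fun m : ℕ => (1:ℝ)/(m+1)) atTop (nhds 0) :=
      tendsto_one_div_add_atTop_nhds_zero_nat
    have hs : Tendsto (fun m : ℕ => (1 - (1:ℝ)/(m+1))) atTop (nhds (1 - 0)) :=
      tendsto_const_nhds.sub t1
    have := (hs.smul_const x).add (t1.smul_const y)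
    simpa using this
  refine mem_closure_of_tendsto hlim (Filter.Eventually.of_forall fun m => ?_)
  have h1 : (0:ℝ) < 1/(m+1) := by positivity
  have h2 : (1:ℝ)/(m+1) ≤ 1 := by
    rw [div_le_one (by positivity)]
    linarith [Nat.cast_nonneg (α := ℝ) m]
  exact hconv.combo_closure_interior_mem_interior hx hy (by linarith) h1 (by ring)

end AuxHN2

set_option maxHeartbeats 2000000 in
/-- necessary condition — at a point of `∂cl(S)` where an irredundant and
nonsingular defining polynomial vanishes, that polynomial is quasi-concave. -/
theorem quasiConcaveAt_of_irredundant_nonsingular {n m : ℕ}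
    (mk : Fin m → ℕ) (g : ∀ k, Fin (mk k) → MvPolynomial (Fin n) ℝ)
    (T : Fin m → Set (Rn n))
    (hT : ∀ k, T k = {x : Rn n | ∀ i, 0 ≤ peval (g k i) x})
    (S : Set (Rn n)) (hconv : Convex ℝ S) (hint : (interior S).Nonempty)
    (hcl : closure S = ⋃ k, T k)
    (k : Fin m) (i : Fin (mk k)) (u : Rn n)
    (hu : u ∈ frontier (closure S) ∩ frontier (T k))
    (hgu : peval (g k i) u = 0)
    (hns : pgrad (g k i) u ≠ 0)
    (hirr : ∃ w : ℕ → Rn n, Tendsto w atTop (nhds u) ∧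
      ∀ N : ℕ, peval (g k i) (w N) = 0 ∧ w N ∈ frontier (closure S) ∧
        IsNonsingularBoundaryPoint (g k) (T k) (w N)) :
    QuasiConcaveAt (g k i) u := by
  classical
  obtain ⟨w, hwten, hwprop⟩ := hirr
  have hTclosed : IsClosed (T k) := by
    rw [hT k]
    have : {x : Rn n | ∀ i', 0 ≤ peval (g k i') x}
        = ⋂ i', {x : Rn n | 0 ≤ peval (g k i') x} := by
      ext x; simp [Set.mem_iInter]
    rw [this]
    exact isClosed_iInter fun i' =>
      isClosed_le continuous_const (continuous_peval' _)
  have hTsub : T k ⊆ closure S := by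
    rw [hcl]; exact Set.subset_iUnion T k
  -- gradient nonvanishing along the sequence
  have hgradN : ∀ N, pgrad (g k i) (w N) ≠ 0 := by
    intro N
    obtain ⟨hgw0, _, _, i', _, hgr, huniq⟩ := hwprop N
    obtain rfl := huniq i hgw0
    exact hgr
  -- quasi-concavity at each w N
  have hkey : ∀ N, ∀ v' : Fin n → ℝ,
      (∑ i', pgrad (g k i) (w N) i' * v' i' = 0) →
      ∑ i', ∑ j', v' i' * phess (g k i) (w N) i' j' * v' j' ≤ 0 := by
    intro N
    obtain ⟨hgw0, hwfr, hfrT, i', hgi'0, hgradi', huniq⟩ := hwprop N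
    obtain rfl := huniq i hgw0
    have hwT : w N ∈ T k := by
      have := frontier_subset_closure hfrT
      rwa [hTclosed.closure_eq] at this
    have hwTmem : ∀ j, 0 ≤ peval (g k j) (w N) := by
      rw [hT k] at hwT; exact hwT
    have hwpos : ∀ j, j ≠ i → 0 < peval (g k j) (w N) := by
      intro j hj
      rcases (hwTmem j).lt_or_eq with h | h
      · exact h
      · exact absurd (huniq j h.symm) hj
    have hwnotint : w N ∉ interior S := fun h =>
      hwfr.2 (interior_mono subset_closure h)
    obtain ⟨f, hf⟩ := geometric_hahn_banach_open_point
      hconv.interior isOpen_interior hwnotint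
    have hfle : ∀ x ∈ closure S, f x ≤ f (w N) := by
      intro x hx
      have hsub2 := closure_subset_closure_interior hconv hint
      exact closure_minimal (fun a ha => (hf a ha).le)
        (isClosed_le f.continuous continuous_const) (hsub2 hx)
    have hfne : ∃ a', f a' < f (w N) := by
      obtain ⟨y, hy⟩ := hint
      exact ⟨y, hf y hy⟩
    have hsupp : ∀ x : Rn n, (∀ j, 0 ≤ peval (g k j) x) → f x ≤ f (w N) := by
      intro x hx
      apply hfle
      apply hTsub
      rw [hT k]
      exact hx
    exact quasi_at_point (g k) i (w N) hgw0 hwpos hgradi' f hfne hsupp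
  -- pass to the limit
  intro v hv
  rw [neg_nonneg]
  have hQu : 0 < ∑ i', pgrad (g k i) u i' * pgrad (g k i) u i' :=
    sum_sq_pos_of_ne hns
  set c : ℕ → ℝ := fun N => (∑ i', pgrad (g k i) (w N) i' * v i')
    / (∑ i', pgrad (g k i) (w N) i' * pgrad (g k i) (w N) i') with hcdef
  set vN : ℕ → Fin n → ℝ := fun N i' => v i' - c N * pgrad (g k i) (w N) i' with hvN
  have hQN : ∀ N, 0 < ∑ i', pgrad (g k i) (w N) i' * pgrad (g k i) (w N) i' :=
    fun N => sum_sq_pos_of_ne (hgradN N)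
  have horthN : ∀ N, ∑ i', pgrad (g k i) (w N) i' * vN N i' = 0 := by
    intro N
    have hsplit : ∑ i', pgrad (g k i) (w N) i' * vN N i'
        = (∑ i', pgrad (g k i) (w N) i' * v i')
          - c N * ∑ i', pgrad (g k i) (w N) i' * pgrad (g k i) (w N) i' := by
      rw [Finset.mul_sum, ← Finset.sum_sub_distrib]
      exact Finset.sum_congr rfl fun i' _ => by simp [hvN]; ring
    have hcQ : c N * ∑ i', pgrad (g k i) (w N) i' * pgrad (g k i) (w N) i'
        = ∑ i', pgrad (g k i) (w N) i' * v i' :=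
      div_mul_cancel₀ _ (hQN N).ne'
    rw [hsplit, hcQ, sub_self]
  have hineqN : ∀ N, ∑ i', ∑ j', vN N i' * phess (g k i) (w N) i' j' * vN N j' ≤ 0 :=
    fun N => hkey N (vN N) (horthN N)
  have htp : ∀ p : MvPolynomial (Fin n) ℝ,
      Tendsto (fun N => peval p (w N)) atTop (nhds (peval p u)) := fun p =>
    ((continuous_peval' p).continuousAt.tendsto).comp hwten
  have htgrad : ∀ i', Tendsto (fun N => pgrad (g k i) (w N) i') atTop
      (nhds (pgrad (g k i) u i')) := fun i' => htp (MvPolynomial.pderiv i' (g k i))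
  have htphess : ∀ i' j', Tendsto (fun N => phess (g k i) (w N) i' j') atTop
      (nhds (phess (g k i) u i' j')) := fun i' j' =>
    htp (MvPolynomial.pderiv i' (MvPolynomial.pderiv j' (g k i)))
  have hcten : Tendsto c atTop (nhds 0) := by
    have hnum : Tendsto (fun N => ∑ i', pgrad (g k i) (w N) i' * v i') atTop
        (nhds (∑ i', pgrad (g k i) u i' * v i')) :=
      tendsto_finset_sum _ fun i' _ => (htgrad i').mul_const (v i')
    have hden : Tendsto
        (fun N => ∑ i', pgrad (g k i) (w N) i' * pgrad (g k i) (w N) i') atTop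
        (nhds (∑ i', pgrad (g k i) u i' * pgrad (g k i) u i')) :=
      tendsto_finset_sum _ fun i' _ => (htgrad i').mul (htgrad i')
    have := hnum.div hden (ne_of_gt hQu)
    rw [hv, zero_div] at this
    exact this
  have hvten : ∀ i', Tendsto (fun N => vN N i') atTop (nhds (v i')) := by
    intro i'
    have hx : Tendsto (fun N => v i' - c N * pgrad (g k i) (w N) i') atTop
        (nhds (v i' - 0 * pgrad (g k i) u i')) :=
      tendsto_const_nhds.sub (hcten.mul (htgrad i'))
    simpa using hx
  have hsumten : Tendsto
      (fun N => ∑ i', ∑ j', vN N i' * phess (g k i) (w N) i' j' * vN N j') atTop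
      (nhds (∑ i', ∑ j', v i' * phess (g k i) u i' j' * v j')) :=
    tendsto_finset_sum _ fun i' _ => tendsto_finset_sum _ fun j' _ =>
      ((hvten i').mul (htphess i' j')).mul (hvten j')
  exact le_of_tendsto hsumten (Filter.Eventually.of_forall hineqN)
end
end

section
/- Let S ⊆ ℝⁿ be a convex set with nonempty interior, let g be a real polynomial on ℝⁿ, and let u ∈ ∂S satisfy g(u) = 0 and ∇g(u) ≠ 0. Suppose there is δ > 0 such that {x ∈ B(u, δ) : g(x) ≥ 0} ⊆ S, where B(u, δ) = {x ∈ ℝⁿ : ‖x − u‖ < δ}. Then −vᵀ∇²g(u)v ≥ 0 for every v ∈ ℝⁿ with ∇g(u)ᵀv = 0, i.e., g is quasi-concave at u. -/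
open MvPolynomial Metric Set Pointwise Filter Topology

noncomputable section

namespace QCAux

variable {n : ℕ}

lemma derivative_eval₂_poly (P : Fin n → Polynomial ℝ) (g : MvPolynomial (Fin n) ℝ) :
    (MvPolynomial.eval₂ Polynomial.C P g).derivative
      = ∑ i, MvPolynomial.eval₂ Polynomial.C P (pderiv i g) * (P i).derivative := by
  induction g using MvPolynomial.induction_on with
  | C a => simp
  | add p q hp hq =>
      simp [hp, hq, MvPolynomial.eval₂_add, Finset.sum_add_distrib, add_mul]
  | mul_X p i hp =>
      classical
      have key : (∑ x : Fin n, (MvPolynomial.eval₂ Polynomial.C P (pderiv x p) * P i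
            + MvPolynomial.eval₂ Polynomial.C P p
              * MvPolynomial.eval₂ Polynomial.C P (Pi.single (M := fun _ => MvPolynomial (Fin n) ℝ) x 1 i)) * (P x).derivative)
          = (∑ x : Fin n, MvPolynomial.eval₂ Polynomial.C P (pderiv x p) * (P x).derivative) * P i
            + MvPolynomial.eval₂ Polynomial.C P p * (P i).derivative := by
        have e1 : ∀ x ∈ Finset.univ, (MvPolynomial.eval₂ Polynomial.C P (pderiv x p) * P i
            + MvPolynomial.eval₂ Polynomial.C P p
              * MvPolynomial.eval₂ Polynomial.C P (Pi.single (M := fun _ => MvPolynomial (Fin n) ℝ) x 1 i)) * (P x).derivative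
            = MvPolynomial.eval₂ Polynomial.C P (pderiv x p) * (P x).derivative * P i
              + (if x = i then
                  MvPolynomial.eval₂ Polynomial.C P p * (P x).derivative else 0) := by
          intro x _
          by_cases h : x = i
          · subst h; simp [Pi.single_apply]; ring
          · have : (Pi.single (M := fun _ => MvPolynomial (Fin n) ℝ) x 1 i) = 0 := by
              simp [Pi.single_apply, Ne.symm h]
            simp [this, h]; ring
        rw [Finset.sum_congr rfl e1, Finset.sum_add_distrib,
          Finset.sum_ite_eq' Finset.univ i, Finset.sum_mul]
        simp
      simp only [MvPolynomial.eval₂_mul, MvPolynomial.eval₂_X, Polynomial.derivative_mul, hp,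
        pderiv_mul, pderiv_X, MvPolynomial.eval₂_add, key]

lemma eval_eval₂_poly (P : Fin n → Polynomial ℝ) (g : MvPolynomial (Fin n) ℝ) (t : ℝ) :
    ((MvPolynomial.eval₂ Polynomial.C P g).eval t)
      = MvPolynomial.eval (fun i => (P i).eval t) g := by
  rw [show ((MvPolynomial.eval₂ Polynomial.C P g).eval t)
      = (Polynomial.evalRingHom t) (MvPolynomial.eval₂ Polynomial.C P g) from rfl,
    MvPolynomial.eval₂_comp_left, ← MvPolynomial.eval₂_id]
  congr 1
  · ext a; simp

def curvePoly (g : MvPolynomial (Fin n) ℝ) (u v w : Fin n → ℝ) : Polynomial ℝ :=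
  MvPolynomial.eval₂ Polynomial.C
    (fun i => Polynomial.C (u i) + Polynomial.C (v i) * Polynomial.X
        + Polynomial.C (w i) * Polynomial.X ^ 2) g

lemma curvePoly_eval (g : MvPolynomial (Fin n) ℝ) (u v w : Fin n → ℝ) (t : ℝ) :
    (curvePoly g u v w).eval t
      = MvPolynomial.eval (fun i => u i + v i * t + w i * t ^ 2) g := by
  rw [curvePoly, eval_eval₂_poly]; simp

lemma curvePoly_eval_zero (g : MvPolynomial (Fin n) ℝ) (u v w : Fin n → ℝ) :
    (curvePoly g u v w).eval 0 = MvPolynomial.eval u g := by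
  simp [curvePoly_eval]

lemma curvePoly_deriv_eval_zero (g : MvPolynomial (Fin n) ℝ) (u v w : Fin n → ℝ) :
    (curvePoly g u v w).derivative.eval 0
      = ∑ i, MvPolynomial.eval u (pderiv i g) * v i := by
  rw [curvePoly, derivative_eval₂_poly]
  simp [Polynomial.eval_finset_sum, eval_eval₂_poly]

lemma curvePoly_deriv2_eval_zero (g : MvPolynomial (Fin n) ℝ) (u v w : Fin n → ℝ) :
    (curvePoly g u v w).derivative.derivative.eval 0
      = (∑ i, ∑ j, MvPolynomial.eval u (pderiv j (pderiv i g)) * v j * v i)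
        + 2 * ∑ i, MvPolynomial.eval u (pderiv i g) * w i := by
  rw [curvePoly, derivative_eval₂_poly, Polynomial.derivative_sum]
  simp only [Polynomial.derivative_mul, derivative_eval₂_poly]
  rw [Polynomial.eval_finset_sum]
  simp only [Polynomial.eval_add, Polynomial.eval_mul, eval_eval₂_poly,
    Polynomial.eval_finset_sum, Polynomial.derivative_add, Polynomial.derivative_mul,
    Polynomial.derivative_C, Polynomial.derivative_X, Polynomial.derivative_X_pow,
    Polynomial.eval_C, Polynomial.eval_X, Polynomial.eval_pow, mul_zero, zero_mul, add_zero,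
    zero_add, mul_one, one_mul]
  norm_num
  rw [Finset.sum_add_distrib]
  congr 1
  · exact Finset.sum_congr rfl fun i _ => by rw [Finset.sum_mul]
  · rw [Finset.mul_sum]
    exact Finset.sum_congr rfl fun i _ => by ring

lemma poly_pos_of_deriv_pos (p : Polynomial ℝ) (h0 : p.eval 0 = 0)
    (h1 : 0 < p.derivative.eval 0) : ∀ᶠ t in 𝓝[>] (0:ℝ), 0 < p.eval t := by
  obtain ⟨s, rfl⟩ : Polynomial.X ∣ p := Polynomial.X_dvd_iff.2 (by
    rw [Polynomial.coeff_zero_eq_eval_zero]; exact h0)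
  have hs0 : 0 < s.eval 0 := by
    have : (Polynomial.X * s).derivative.eval 0 = s.eval 0 := by
      simp [Polynomial.derivative_mul]
    rwa [this] at h1
  have hev : ∀ᶠ t in 𝓝 (0:ℝ), 0 < s.eval t :=
    (s.continuous_aeval.tendsto 0).eventually (eventually_gt_nhds hs0)
  filter_upwards [eventually_nhdsWithin_of_eventually_nhds hev,
    self_mem_nhdsWithin] with t ht ht0
  simpa using mul_pos ht0 ht

lemma poly_pos_of_deriv2_pos (p : Polynomial ℝ) (h0 : p.eval 0 = 0)
    (h1 : p.derivative.eval 0 = 0) (h2 : 0 < p.derivative.derivative.eval 0) :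
    ∀ᶠ t in 𝓝[>] (0:ℝ), 0 < p.eval t := by
  obtain ⟨s, rfl⟩ : Polynomial.X ∣ p := Polynomial.X_dvd_iff.2 (by
    rw [Polynomial.coeff_zero_eq_eval_zero]; exact h0)
  have hs0 : s.eval 0 = 0 := by
    have : (Polynomial.X * s).derivative.eval 0 = s.eval 0 := by
      simp [Polynomial.derivative_mul]
    rwa [this] at h1
  obtain ⟨r, rfl⟩ : Polynomial.X ∣ s := Polynomial.X_dvd_iff.2 (by
    rw [Polynomial.coeff_zero_eq_eval_zero]; exact hs0)
  have hr0 : 0 < r.eval 0 := by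
    have : (Polynomial.X * (Polynomial.X * r)).derivative.derivative.eval 0 = 2 * r.eval 0 := by
      simp [Polynomial.derivative_mul]; ring
    rw [this] at h2; linarith
  have hev : ∀ᶠ t in 𝓝 (0:ℝ), 0 < r.eval t :=
    (r.continuous_aeval.tendsto 0).eventually (eventually_gt_nhds hr0)
  filter_upwards [eventually_nhdsWithin_of_eventually_nhds hev,
    self_mem_nhdsWithin] with t ht ht0
  simp only [Polynomial.eval_mul, Polynomial.eval_X, ← mul_assoc]
  exact mul_pos (mul_pos ht0 ht0) ht


end QCAux

/-- if `{x ∈ B(u, δ) : g(x) ≥ 0} ⊆ S` for a convex set `S` with nonempty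
interior, `g(u) = 0`, `∇g(u) ≠ 0` at `u ∈ ∂S`, then `g` is quasi-concave at `u`. -/
theorem quasiConcaveAt_of_local_superlevel_subset {n : ℕ}
    (S : Set (Rn n)) (hconv : Convex ℝ S) (hint : (interior S).Nonempty)
    (g : MvPolynomial (Fin n) ℝ) (u : Rn n) (hu : u ∈ frontier S)
    (hgu : peval g u = 0) (hgrad : pgrad g u ≠ 0)
    (hloc : ∃ δ > 0, {x ∈ ball u δ | 0 ≤ peval g x} ⊆ S) :
    ∀ v : Fin n → ℝ, (∑ i, pgrad g u i * v i) = 0 →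
      0 ≤ -(∑ i, ∑ j, v i * phess g u i j * v j) := by
  classical
  obtain ⟨δ, hδ, hsub⟩ := hloc
  -- the supporting functional
  have hui : u ∉ interior S := fun h => hu.2 h
  obtain ⟨f, hf⟩ := geometric_hahn_banach_open_point hconv.interior isOpen_interior hui
  obtain ⟨a, ha⟩ := hint
  have hfS : ∀ x ∈ S, f x ≤ f u := by
    intro x hx
    have hev : ∀ᶠ t in 𝓝[>] (0:ℝ), f ((1 - t) • x + t • a) ≤ f u := by
      filter_upwards [self_mem_nhdsWithin,
        eventually_nhdsWithin_of_eventually_nhds (eventually_lt_nhds one_pos)] with t ht ht1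
      exact (hf _ (hconv.combo_self_interior_mem_interior hx ha (by linarith) ht
        (by ring))).le
    have htend : Filter.Tendsto (fun t : ℝ => f ((1 - t) • x + t • a)) (𝓝[>] 0) (𝓝 (f x)) := by
      have : Continuous (fun t : ℝ => f ((1 - t) • x + t • a)) := by
        fun_prop
      have h0 : f ((1 - (0:ℝ)) • x + (0:ℝ) • a) = f x := by simp
      exact h0 ▸ (this.tendsto 0).mono_left nhdsWithin_le_nhds
    exact le_of_tendsto htend hev
  set gv : Rn n := WithLp.toLp 2 (fun i => pgrad g u i : Fin n → ℝ) with hgv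
  have hgvapp : ∀ i, gv i = pgrad g u i := fun i => rfl
  have hN2 : 0 < ∑ i, pgrad g u i * pgrad g u i := by
    obtain ⟨i0, hi0⟩ := Function.ne_iff.1 hgrad
    refine Finset.sum_pos' (fun i _ => mul_self_nonneg _) ⟨i0, Finset.mem_univ i0,
      mul_self_pos.2 hi0⟩
  set N2 : ℝ := ∑ i, pgrad g u i * pgrad g u i with hN2def
  -- key curve lemma
  have curveKey : ∀ ve we : Rn n,
      (∀ᶠ t in 𝓝[>] (0:ℝ),
        0 < (QCAux.curvePoly g (fun i => u i) (fun i => ve i) (fun i => we i)).eval t) →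
      ∃ t : ℝ, 0 < t ∧ t * f ve + t ^ 2 * f we ≤ 0 := by
    intro ve we hev
    have hc : Continuous (fun t : ℝ => u + t • ve + t ^ 2 • we) := by fun_prop
    have hc0 : (fun t : ℝ => u + t • ve + t ^ 2 • we) 0 = u := by simp
    have hball : ∀ᶠ t in 𝓝[>] (0:ℝ), u + t • ve + t ^ 2 • we ∈ ball u δ := by
      have htd : Filter.Tendsto (fun t : ℝ => u + t • ve + t ^ 2 • we) (𝓝[>] 0) (𝓝 u) := by
        have := (hc.tendsto 0).mono_left (nhdsWithin_le_nhds (s := Ioi (0:ℝ)))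
        simpa using this
      exact htd.eventually (isOpen_ball.eventually_mem (mem_ball_self hδ))
    obtain ⟨t, htmem, ht0, htpos⟩ := (hball.and (hev.and self_mem_nhdsWithin)).exists
    refine ⟨t, htpos, ?_⟩
    have hxS : u + t • ve + t ^ 2 • we ∈ S := by
      apply hsub
      refine ⟨htmem, ?_⟩
      have : peval g (u + t • ve + t ^ 2 • we)
          = (QCAux.curvePoly g (fun i => u i) (fun i => ve i) (fun i => we i)).eval t := by
        rw [QCAux.curvePoly_eval, peval]
        have hpt : (fun i => (u + t • ve + t ^ 2 • we) i)
            = (fun i => u i + ve i * t + we i * t ^ 2) := by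
          funext i
          show u i + t * ve i + t ^ 2 * we i = _
          ring
        rw [hpt]
      rw [this]; exact ht0.le
    have := hfS _ hxS
    have hlin : f (u + t • ve + t ^ 2 • we) = f u + t * f ve + t ^ 2 * f we := by
      simp [map_add, map_smul]
    linarith [hlin ▸ this]
  -- Step A : strict inner product positive gives f ≤ 0
  have stepA : ∀ d : Rn n, 0 < (∑ i, pgrad g u i * d i) → f d ≤ 0 := by
    intro d hd
    have h0 : (QCAux.curvePoly g (fun i => u i) (fun i => d i)
        (fun i => (0:Rn n) i)).eval 0 = 0 := by
      rw [QCAux.curvePoly_eval_zero]; exact hgu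
    have h1 : 0 < (QCAux.curvePoly g (fun i => u i) (fun i => d i)
        (fun i => (0:Rn n) i)).derivative.eval 0 := by
      rw [QCAux.curvePoly_deriv_eval_zero]; exact hd
    obtain ⟨t, htpos, hle⟩ := curveKey d 0
      (QCAux.poly_pos_of_deriv_pos _ h0 h1)
    have hz : f (0 : Rn n) = 0 := map_zero f
    rw [hz, mul_zero, add_zero] at hle
    by_contra hpos
    push_neg at hpos
    nlinarith [mul_pos htpos hpos]
  have hgvle : f gv ≤ 0 := stepA gv (by simpa [hgvapp] using hN2)
  -- Step A' : weak inequality version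
  have stepA' : ∀ d : Rn n, 0 ≤ (∑ i, pgrad g u i * d i) → f d ≤ 0 := by
    intro d hd
    have hev : ∀ᶠ ε in 𝓝[>] (0:ℝ), f d + ε * f gv ≤ 0 := by
      filter_upwards [self_mem_nhdsWithin] with ε hε
      have hsum : (∑ i, pgrad g u i * (d + ε • gv) i)
          = (∑ i, pgrad g u i * d i) + ε * N2 := by
        rw [hN2def, Finset.mul_sum, ← Finset.sum_add_distrib]
        refine Finset.sum_congr rfl fun i _ => ?_
        show pgrad g u i * (d i + ε * pgrad g u i) = _
        ring
      have h1 : 0 < ∑ i, pgrad g u i * (d + ε • gv) i := by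
        rw [hsum]
        have := mul_pos (α := ℝ) hε hN2
        linarith
      have h2 := stepA (d + ε • gv) h1
      have h3 : f (d + ε • gv) = f d + ε * f gv := by simp
      linarith [h3 ▸ h2]
    have htd : Filter.Tendsto (fun ε : ℝ => f d + ε * f gv) (𝓝[>] 0) (𝓝 (f d)) := by
      have hcont : Continuous fun ε : ℝ => f d + ε * f gv := by fun_prop
      have := (hcont.tendsto 0).mono_left (nhdsWithin_le_nhds (s := Ioi (0:ℝ)))
      simpa using this
    exact le_of_tendsto htd hev
  -- Step B : f vanishes on the tangent hyperplane
  have stepB : ∀ d : Rn n, (∑ i, pgrad g u i * d i) = 0 → f d = 0 := by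
    intro d hd
    have h1 := stepA' d (ge_of_eq hd)
    have h2 : f (-d) ≤ 0 := by
      refine stepA' (-d) ?_
      have hsum : (∑ i, pgrad g u i * (-d) i) = -(∑ i, pgrad g u i * d i) := by
        rw [← Finset.sum_neg_distrib]
        refine Finset.sum_congr rfl fun i _ => ?_
        show pgrad g u i * (-(d i)) = _
        ring
      rw [hsum, hd, neg_zero]
    have h3 : f (-d) = -(f d) := map_neg f d
    linarith [h3 ▸ h2]
  -- Step C : f gv is strictly negative
  have hgvlt : f gv < 0 := by
    have hfa : f (a - u) < 0 := by
      have h1 := hf a ha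
      have h2 : f (a - u) = f a - f u := by simp
      linarith [h1, h2]
    set e : Rn n := a - u with he
    set s0 : ℝ := (∑ i, pgrad g u i * e i) / N2 with hs0
    have hde : (∑ i, pgrad g u i * (e - s0 • gv) i) = 0 := by
      have hsum : (∑ i, pgrad g u i * (e - s0 • gv) i)
          = (∑ i, pgrad g u i * e i) - s0 * N2 := by
        rw [hN2def, Finset.mul_sum, ← Finset.sum_sub_distrib]
        refine Finset.sum_congr rfl fun i _ => ?_
        show pgrad g u i * (e i - s0 * pgrad g u i) = _
        ring
      rw [hsum, hs0]
      field_simp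
      ring
    have h0 := stepB (e - s0 • gv) hde
    have hfe : f e = s0 * f gv := by
      have : f (e - s0 • gv) = f e - s0 * f gv := by simp
      rw [this] at h0
      linarith
    refine lt_of_le_of_ne hgvle fun h => ?_
    rw [h, mul_zero] at hfe
    exact absurd hfe (ne_of_lt hfa)
  -- Final argument
  intro v hv
  by_contra hcon
  push_neg at hcon
  have hQ : 0 < ∑ i, ∑ j, v i * phess g u i j * v j := by linarith
  set Q : ℝ := ∑ i, ∑ j, v i * phess g u i j * v j with hQdef
  set κ : ℝ := Q / (4 * N2) with hκdef
  have hκ : 0 < κ := div_pos hQ (by linarith)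
  set ve : Rn n := WithLp.toLp 2 (fun i => v i : Fin n → ℝ) with hve
  set we : Rn n := (-κ) • gv with hwe
  have h0 : (QCAux.curvePoly g (fun i => u i) (fun i => ve i)
      (fun i => we i)).eval 0 = 0 := by
    rw [QCAux.curvePoly_eval_zero]; exact hgu
  have h1 : (QCAux.curvePoly g (fun i => u i) (fun i => ve i)
      (fun i => we i)).derivative.eval 0 = 0 := by
    rw [QCAux.curvePoly_deriv_eval_zero]; exact hv
  have h2 : (QCAux.curvePoly g (fun i => u i) (fun i => ve i)
      (fun i => we i)).derivative.derivative.eval 0 = Q / 2 := by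
    rw [QCAux.curvePoly_deriv2_eval_zero]
    have hS1 : (∑ i, ∑ j, MvPolynomial.eval (fun k => u k)
          (pderiv j (pderiv i g)) * ve j * ve i) = Q := by
      rw [hQdef, Finset.sum_comm]
      refine Finset.sum_congr rfl fun i _ => Finset.sum_congr rfl fun j _ => ?_
      show MvPolynomial.eval (fun k => u k) (pderiv i (pderiv j g)) * v i * v j
        = v i * phess g u i j * v j
      show phess g u i j * v i * v j = _
      ring
    have hS2 : (∑ i, MvPolynomial.eval (fun k => u k) (pderiv i g) * we i)
        = -κ * N2 := by
      rw [hN2def, Finset.mul_sum]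
      refine Finset.sum_congr rfl fun i _ => ?_
      show pgrad g u i * (-κ * pgrad g u i) = _
      ring
    rw [hS1, hS2, hκdef]
    have hN2ne : N2 ≠ 0 := ne_of_gt hN2
    field_simp
    ring
  have hQpos2 : 0 < (QCAux.curvePoly g (fun i => u i) (fun i => ve i)
      (fun i => we i)).derivative.derivative.eval 0 := by
    rw [h2]; linarith
  obtain ⟨t, htpos, hle⟩ := curveKey ve we
    (QCAux.poly_pos_of_deriv2_pos _ h0 h1 hQpos2)
  have hfve : f ve = 0 := stepB ve hv
  have hfwe : f we = -κ * f gv := by simp [hwe]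
  have hwpos : 0 < f we := by rw [hfwe]; nlinarith
  rw [hfve, mul_zero, zero_add] at hle
  nlinarith [mul_pos (pow_pos htpos 2) hwpos]
end
end

section
/- Let T₁, …, Tₘ be nonempty bounded subsets of ℝⁿ. If each convex hull conv(Tₖ) is SDP representable, then conv(⋃_{k=1}^m Tₖ) is SDP representable. -/
open MvPolynomial Metric Set Pointwise Filter

noncomputable section

section SDPHelpers
open Matrix

def toRn {k : ℕ} (f : Fin k → ℝ) : Rn k := WithLp.toLp 2 f
@[simp] lemma toRn_apply {k : ℕ} (f : Fin k → ℝ) (i : Fin k) : toRn f i = f i := rfl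

def GRep {n : ℕ} (S : Set (Rn n)) : Prop :=
  ∃ (U D : Type) (_ : Fintype U) (_ : Fintype D) (_ : DecidableEq D)
    (A₀ : Matrix D D ℝ) (A : Fin n → Matrix D D ℝ) (B : U → Matrix D D ℝ),
    A₀.IsSymm ∧ (∀ i, (A i).IsSymm) ∧ (∀ j, (B j).IsSymm) ∧
    S = {x : Rn n | ∃ u : U → ℝ,
      (A₀ + ∑ i, x i • A i + ∑ j, u j • B j).PosSemidef}

lemma isSymm_sum {D ι : Type*} (s : Finset ι) (f : ι → Matrix D D ℝ)
    (h : ∀ i ∈ s, (f i).IsSymm) : (∑ i ∈ s, f i).IsSymm := by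
  unfold Matrix.IsSymm
  rw [Matrix.transpose_sum]
  exact Finset.sum_congr rfl h

lemma isSymm_smul {D : Type*} (c : ℝ) {M : Matrix D D ℝ} (h : M.IsSymm) : (c • M).IsSymm := by
  unfold Matrix.IsSymm at *
  rw [Matrix.transpose_smul, h]

lemma posSemidef_smul {D : Type*} [Fintype D] {M : Matrix D D ℝ} (hM : M.PosSemidef)
    {c : ℝ} (hc : 0 ≤ c) : (c • M).PosSemidef := by
  refine Matrix.posSemidef_iff_dotProduct_mulVec.mpr ⟨?_, ?_⟩
  · have h1 := hM.1
    unfold Matrix.IsHermitian at *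
    rw [Matrix.conjTranspose_smul, h1]
    simp
  · intro x
    rw [Matrix.smul_mulVec, dotProduct_smul]
    exact smul_nonneg hc (hM.dotProduct_mulVec_nonneg x)

lemma IsSDPRepresentable.grep {n : ℕ} {S : Set (Rn n)} (h : IsSDPRepresentable S) : GRep S := by
  obtain ⟨N, d, A₀, A, B, h1, h2, h3, h4⟩ := h
  exact ⟨Fin N, Fin d, inferInstance, inferInstance, inferInstance, A₀, A, B, h1, h2, h3, h4⟩

lemma GRep.isSDPRepresentable {n : ℕ} {S : Set (Rn n)} (h : GRep S) : IsSDPRepresentable S := by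
  obtain ⟨U, D, hU, hD, hDe, A₀, A, B, h1, h2, h3, h4⟩ := h
  have eU : U ≃ Fin (Fintype.card U) := Fintype.equivFin U
  have eD : Fin (Fintype.card D) ≃ D := (Fintype.equivFin D).symm
  refine ⟨Fintype.card U, Fintype.card D, A₀.submatrix eD eD,
    fun i => (A i).submatrix eD eD, fun j => (B (eU.symm j)).submatrix eD eD,
    h1.submatrix eD, fun i => (h2 i).submatrix eD, fun j => (h3 _).submatrix eD, ?_⟩
  have key : ∀ (x : Rn n) (u' : Fin (Fintype.card U) → ℝ),
      (A₀.submatrix eD eD + ∑ i, x i • (A i).submatrix eD eD +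
        ∑ j, u' j • (B (eU.symm j)).submatrix eD eD)
      = (A₀ + ∑ i, x i • A i + ∑ j : U, u' (eU j) • B j).submatrix eD eD := by
    intro x u'
    ext a b
    simp only [Matrix.add_apply, Matrix.submatrix_apply, Matrix.sum_apply, Matrix.smul_apply,
      smul_eq_mul]
    congr 1
    exact Fintype.sum_equiv eU.symm _ _ (fun j => by rw [Equiv.apply_symm_apply])
  rw [h4]
  ext x
  simp only [Set.mem_setOf_eq]
  constructor
  · rintro ⟨u, hu⟩
    refine ⟨u ∘ eU.symm, ?_⟩
    rw [key, Matrix.posSemidef_submatrix_equiv]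
    simp only [Function.comp_apply, Equiv.symm_apply_apply]
    exact hu
  · rintro ⟨u', hu'⟩
    refine ⟨fun j => u' (eU j), ?_⟩
    rw [← Matrix.posSemidef_submatrix_equiv eD, ← key]
    exact hu'

lemma fromBlocks_posSemidef_iff {D₁ D₂ : Type*} [Fintype D₁] [Fintype D₂]
    {M : Matrix D₁ D₁ ℝ} {N : Matrix D₂ D₂ ℝ} :
    (Matrix.fromBlocks M 0 0 N).PosSemidef ↔ M.PosSemidef ∧ N.PosSemidef := by
  constructor
  · intro h
    constructor
    · have h1 := h.submatrix (Sum.inl : D₁ → D₁ ⊕ D₂)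
      have : (Matrix.fromBlocks M 0 0 N).submatrix (Sum.inl : D₁ → D₁ ⊕ D₂) Sum.inl = M := by
        ext a b; simp
      rwa [this] at h1
    · have h1 := h.submatrix (Sum.inr : D₂ → D₁ ⊕ D₂)
      have : (Matrix.fromBlocks M 0 0 N).submatrix (Sum.inr : D₂ → D₁ ⊕ D₂) Sum.inr = N := by
        ext a b; simp
      rwa [this] at h1
  · rintro ⟨hM, hN⟩
    refine Matrix.posSemidef_iff_dotProduct_mulVec.mpr ⟨?_, ?_⟩
    · rw [Matrix.isHermitian_fromBlocks_iff]
      exact ⟨hM.1, by simp, by simp, hN.1⟩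
    · intro x
      rw [Matrix.fromBlocks_mulVec]
      simp only [Matrix.zero_mulVec, add_zero, zero_add]
      have : dotProduct (star x) (Sum.elim (M *ᵥ (x ∘ Sum.inl)) (N *ᵥ (x ∘ Sum.inr)))
          = dotProduct (star (x ∘ Sum.inl)) (M *ᵥ (x ∘ Sum.inl))
            + dotProduct (star (x ∘ Sum.inr)) (N *ᵥ (x ∘ Sum.inr)) := by
        simp only [dotProduct, Fintype.sum_sum_type]
        simp [Pi.star_apply, Function.comp]
      rw [this]
      exact add_nonneg (hM.dotProduct_mulVec_nonneg _) (hN.dotProduct_mulVec_nonneg _)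

lemma GRep.inter {n : ℕ} {S S' : Set (Rn n)} (hS : GRep S) (hS' : GRep S') :
    GRep (S ∩ S') := by
  obtain ⟨U₁, D₁, hU₁, hD₁, hDe₁, A₀, A, B, s1, s2, s3, rfl⟩ := hS
  obtain ⟨U₂, D₂, hU₂, hD₂, hDe₂, A₀', A', B', t1, t2, t3, rfl⟩ := hS'
  classical
  refine ⟨U₁ ⊕ U₂, D₁ ⊕ D₂, inferInstance, inferInstance, inferInstance,
    Matrix.fromBlocks A₀ 0 0 A₀',
    fun i => Matrix.fromBlocks (A i) 0 0 (A' i),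
    Sum.elim (fun j => Matrix.fromBlocks (B j) 0 0 0)
      (fun j => Matrix.fromBlocks 0 0 0 (B' j)), ?_, ?_, ?_, ?_⟩
  · unfold Matrix.IsSymm at *
    rw [Matrix.fromBlocks_transpose, s1, t1]; simp
  · intro i
    unfold Matrix.IsSymm at *
    rw [Matrix.fromBlocks_transpose, s2 i, t2 i]; simp
  · rintro (j | j) <;>
    · unfold Matrix.IsSymm at *
      simp only [Sum.elim_inl, Sum.elim_inr]
      rw [Matrix.fromBlocks_transpose]
      first
      | rw [s3 j]; simp
      | rw [t3 j]; simp
  · ext x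
    simp only [Set.mem_inter_iff, Set.mem_setOf_eq]
    have key : ∀ u : U₁ ⊕ U₂ → ℝ,
        (Matrix.fromBlocks A₀ 0 0 A₀' + ∑ i, x i • Matrix.fromBlocks (A i) 0 0 (A' i) +
          ∑ j : U₁ ⊕ U₂, u j • Sum.elim (fun j => Matrix.fromBlocks (B j) 0 0 0)
            (fun j => Matrix.fromBlocks 0 0 (0 : Matrix D₂ D₁ ℝ) (B' j)) j)
        = Matrix.fromBlocks
            (A₀ + ∑ i, x i • A i + ∑ j, (u ∘ Sum.inl) j • B j) 0 0
            (A₀' + ∑ i, x i • A' i + ∑ j, (u ∘ Sum.inr) j • B' j) := by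
      intro u
      rw [Fintype.sum_sum_type]
      ext (a | a) (b | b) <;>
        simp [Matrix.sum_apply, Function.comp]
    constructor
    · rintro ⟨⟨u₁, hu₁⟩, ⟨u₂, hu₂⟩⟩
      refine ⟨Sum.elim u₁ u₂, ?_⟩
      rw [key, fromBlocks_posSemidef_iff]
      constructor
      · convert hu₁ using 4 <;> rfl
      · convert hu₂ using 4 <;> rfl
    · rintro ⟨u, hu⟩
      rw [key, fromBlocks_posSemidef_iff] at hu
      exact ⟨⟨u ∘ Sum.inl, hu.1⟩, ⟨u ∘ Sum.inr, hu.2⟩⟩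

lemma GRep_univ {n : ℕ} : GRep (Set.univ : Set (Rn n)) := by
  refine ⟨Fin 0, Fin 0, inferInstance, inferInstance, inferInstance, 0, fun _ => 0,
    fun _ => 0, ?_, ?_, ?_, ?_⟩
  · simp [Matrix.IsSymm]
  · simp [Matrix.IsSymm]
  · simp [Matrix.IsSymm]
  · ext x
    simp only [Set.mem_univ, Set.mem_setOf_eq, true_iff]
    refine ⟨fun _ => 0, ?_⟩
    constructor
    · ext i j; exact i.elim0
    · intro v
      simp [dotProduct]

lemma GRep.iInter {n m : ℕ} {F : Fin m → Set (Rn n)} (h : ∀ k, GRep (F k)) :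
    GRep (⋂ k, F k) := by
  induction m with
  | zero => simpa [Set.iInter_of_empty] using GRep_univ
  | succ m ih =>
    have : (⋂ k, F k) = F 0 ∩ ⋂ k : Fin m, F k.succ := by
      ext x
      simp only [Set.mem_iInter, Set.mem_inter_iff]
      constructor
      · intro hx; exact ⟨hx 0, fun k => hx k.succ⟩
      · rintro ⟨h0, hs⟩ k
        rcases Fin.eq_zero_or_eq_succ k with rfl | ⟨j, rfl⟩
        · exact h0
        · exact hs j
    rw [this]
    exact (h 0).inter (ih fun k => h k.succ)


lemma GRep.comap {n q : ℕ} {S : Set (Rn q)} (hS : GRep S) (σ : Fin q → Fin n) :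
    GRep {z : Rn n | toRn (fun i => z (σ i)) ∈ S} := by
  obtain ⟨U, D, hU, hD, hDe, A₀, A, B, h1, h2, h3, rfl⟩ := hS
  refine ⟨U, D, hU, hD, hDe, A₀,
    fun j => ∑ i : Fin q, if σ i = j then A i else 0, B, h1, ?_, h3, ?_⟩
  · intro j
    refine isSymm_sum _ _ fun i _ => ?_
    unfold Matrix.IsSymm at *
    split_ifs
    · exact h2 i
    · simp
  · have key : ∀ z : Rn n,
        (∑ j : Fin n, z j • ∑ i : Fin q, if σ i = j then A i else 0)
          = ∑ i : Fin q, z (σ i) • A i := by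
      intro z
      have e1 : ∀ j : Fin n, (z j • ∑ i : Fin q, if σ i = j then A i else 0)
          = ∑ i : Fin q, if σ i = j then z j • A i else 0 := by
        intro j
        rw [Finset.smul_sum]
        exact Finset.sum_congr rfl fun i _ => by split_ifs <;> simp
      rw [Finset.sum_congr rfl fun j _ => e1 j, Finset.sum_comm]
      refine Finset.sum_congr rfl fun i _ => ?_
      have : ∀ j : Fin n, (if σ i = j then z j • A i else 0)
          = if σ i = j then z (σ i) • A i else 0 := by
        intro j; split_ifs with h
        · rw [h]
        · rfl
      rw [Finset.sum_congr rfl fun j _ => this j, Finset.sum_ite_eq]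
      simp
    ext z
    simp only [Set.mem_setOf_eq, toRn_apply]
    constructor
    · rintro ⟨u, hu⟩
      exact ⟨u, by rw [key]; exact hu⟩
    · rintro ⟨u, hu⟩
      rw [key] at hu
      exact ⟨u, hu⟩

lemma posSemidef_unit_iff {M : Matrix Unit Unit ℝ} :
    M.PosSemidef ↔ 0 ≤ M () () := by
  constructor
  · intro h
    have := h.dotProduct_mulVec_nonneg (fun _ => 1)
    simpa [dotProduct, Matrix.mulVec, Matrix.IsSymm] using this
  · intro h
    refine Matrix.posSemidef_iff_dotProduct_mulVec.mpr ⟨?_, ?_⟩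
    · ext i j
      simp [Matrix.conjTranspose_apply]
    · intro x
      have : dotProduct (star x) (M *ᵥ x) = M () () * (x () * x ()) := by
        simp [dotProduct, Matrix.mulVec]; ring
      rw [this]
      exact mul_nonneg h (mul_self_nonneg _)

lemma GRep_halfspace {n : ℕ} (a : Fin n → ℝ) (c : ℝ) :
    GRep {x : Rn n | c ≤ ∑ i, a i * x i} := by
  classical
  refine ⟨Fin 0, Unit, inferInstance, inferInstance, inferInstance,
    Matrix.of fun _ _ => -c, fun i => Matrix.of fun _ _ => a i, fun _ => 0,
    by simp [Matrix.IsSymm]; ext i j; simp, fun i => by simp [Matrix.IsSymm]; ext i j; simp,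
    fun j => by simp [Matrix.IsSymm], ?_⟩
  ext x
  simp only [Set.mem_setOf_eq]
  have key : ∀ u : Fin 0 → ℝ,
      ((Matrix.of fun _ _ => -c) + ∑ i, x i • (Matrix.of fun _ _ => a i : Matrix Unit Unit ℝ)
        + ∑ j : Fin 0, u j • (0 : Matrix Unit Unit ℝ))
      = Matrix.of fun _ _ => (-c + ∑ i, a i * x i) := by
    intro u
    ext i j
    simp [Matrix.sum_apply, mul_comm]
  constructor
  · intro h
    refine ⟨fun j => j.elim0, ?_⟩
    rw [key _, posSemidef_unit_iff]
    simp only [Matrix.of_apply]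
    linarith
  · rintro ⟨u, hu⟩
    rw [key u, posSemidef_unit_iff] at hu
    simp only [Matrix.of_apply] at hu
    linarith

lemma GRep_hyperplane {n : ℕ} (a : Fin n → ℝ) (c : ℝ) :
    GRep {x : Rn n | ∑ i, a i * x i = c} := by
  have : {x : Rn n | ∑ i, a i * x i = c}
      = {x : Rn n | c ≤ ∑ i, a i * x i} ∩ {x : Rn n | -c ≤ ∑ i, (-a i) * x i} := by
    ext x
    simp only [Set.mem_setOf_eq, Set.mem_inter_iff]
    have : ∑ i, (-a i) * x i = -∑ i, a i * x i := by
      rw [← Finset.sum_neg_distrib]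
      exact Finset.sum_congr rfl fun i _ => by ring
    rw [this]
    constructor
    · intro h; constructor <;> linarith
    · rintro ⟨h1, h2⟩; linarith
  rw [this]
  exact (GRep_halfspace a c).inter (GRep_halfspace _ _)


def appnd {n p : ℕ} (x : Rn n) (y : Rn p) : Rn (n + p) :=
  toRn (Fin.addCases (fun i => x i) (fun j => y j))

@[simp] lemma appnd_castAdd {n p : ℕ} (x : Rn n) (y : Rn p) (i : Fin n) :
    appnd x y (Fin.castAdd p i) = x i := by
  simp [appnd, toRn]

@[simp] lemma appnd_natAdd {n p : ℕ} (x : Rn n) (y : Rn p) (j : Fin p) :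
    appnd x y (Fin.natAdd n j) = y j := by
  simp [appnd, toRn]

lemma GRep.proj {n p : ℕ} {S : Set (Rn (n + p))} (hS : GRep S) :
    GRep {x : Rn n | ∃ y : Rn p, appnd x y ∈ S} := by
  obtain ⟨U, D, hU, hD, hDe, A₀, A, B, h1, h2, h3, rfl⟩ := hS
  refine ⟨U ⊕ Fin p, D, inferInstance, hD, hDe, A₀, fun i => A (Fin.castAdd p i),
    Sum.elim B (fun j => A (Fin.natAdd n j)), h1, fun i => h2 _, ?_, ?_⟩
  · rintro (j | j)
    · exact h3 j
    · exact h2 _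
  · have key : ∀ (x : Rn n) (y : Rn p) (u : U → ℝ),
        (A₀ + ∑ i, appnd x y i • A i + ∑ j, u j • B j)
        = (A₀ + ∑ i, x i • A (Fin.castAdd p i) +
            ∑ j : U ⊕ Fin p, (Sum.elim u (fun j' => y j') j) •
              Sum.elim B (fun j' => A (Fin.natAdd n j')) j) := by
      intro x y u
      rw [Fin.sum_univ_add (fun i => appnd x y i • A i), Fintype.sum_sum_type]
      simp only [appnd_castAdd, appnd_natAdd, Sum.elim_inl, Sum.elim_inr]
      abel
    ext x
    simp only [Set.mem_setOf_eq]
    constructor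
    · rintro ⟨y, u, hu⟩
      refine ⟨Sum.elim u (fun j' => y j'), ?_⟩
      rw [← key]
      exact hu
    · rintro ⟨w, hw⟩
      refine ⟨toRn (fun j => w (Sum.inr j)), w ∘ Sum.inl, ?_⟩
      rw [key]
      have : Sum.elim (w ∘ Sum.inl) (fun j' => toRn (fun j => w (Sum.inr j)) j') = w := by
        funext j; cases j <;> rfl
      rw [this]
      exact hw

lemma GRep.convex {n : ℕ} {S : Set (Rn n)} (hS : GRep S) : Convex ℝ S := by
  obtain ⟨U, D, hU, hD, hDe, A₀, A, B, h1, h2, h3, rfl⟩ := hS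
  rintro x ⟨u, hu⟩ y ⟨v, hv⟩ a b ha hb hab
  refine ⟨fun j => a * u j + b * v j, ?_⟩
  have e1 : ∑ i, (a • x + b • y) i • A i
      = a • (∑ i, x i • A i) + b • (∑ i, y i • A i) := by
    rw [Finset.smul_sum, Finset.smul_sum, ← Finset.sum_add_distrib]
    refine Finset.sum_congr rfl fun i _ => ?_
    simp only [PiLp.add_apply, PiLp.smul_apply, smul_eq_mul]
    rw [add_smul, smul_smul, smul_smul]
  have e2 : ∑ j, (a * u j + b * v j) • B j
      = a • (∑ j, u j • B j) + b • (∑ j, v j • B j) := by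
    rw [Finset.smul_sum, Finset.smul_sum, ← Finset.sum_add_distrib]
    refine Finset.sum_congr rfl fun j _ => ?_
    rw [add_smul, smul_smul, smul_smul]
  have e0 : A₀ = a • A₀ + b • A₀ := by rw [← add_smul, hab, one_smul]
  have : (A₀ + ∑ i, (a • x + b • y) i • A i + ∑ j, (a * u j + b * v j) • B j)
      = a • (A₀ + ∑ i, x i • A i + ∑ j, u j • B j)
        + b • (A₀ + ∑ i, y i • A i + ∑ j, v j • B j) := by
    rw [e1, e2]
    nth_rewrite 1 [e0]
    rw [smul_add, smul_add, smul_add, smul_add]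
    abel
  rw [this]
  exact (posSemidef_smul hu ha).add (posSemidef_smul hv hb)


def Hset {n N d : ℕ} (A₀ : Matrix (Fin d) (Fin d) ℝ) (A : Fin n → Matrix (Fin d) (Fin d) ℝ)
    (B : Fin N → Matrix (Fin d) (Fin d) ℝ) : Set (Rn (n+1)) :=
  {w | 0 ≤ w 0 ∧ ∃ v : Fin N → ℝ,
    (w 0 • A₀ + ∑ i, w i.succ • A i + ∑ j, v j • B j).PosSemidef}

def extC {n d : ℕ} (A₀ : Matrix (Fin d) (Fin d) ℝ) (A : Fin n → Matrix (Fin d) (Fin d) ℝ) :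
    Fin (n+1) → Matrix (Fin d) (Fin d) ℝ :=
  fun i => if h : i = 0 then A₀ else A (i.pred h)

@[simp] lemma extC_zero {n d : ℕ} (A₀ : Matrix (Fin d) (Fin d) ℝ)
    (A : Fin n → Matrix (Fin d) (Fin d) ℝ) : extC A₀ A 0 = A₀ := by simp [extC]

@[simp] lemma extC_succ {n d : ℕ} (A₀ : Matrix (Fin d) (Fin d) ℝ)
    (A : Fin n → Matrix (Fin d) (Fin d) ℝ) (i : Fin n) : extC A₀ A i.succ = A i := by
  simp [extC, Fin.succ_ne_zero]

lemma GRep.of_rep {q : ℕ} (U D : Type) [hU : Fintype U] [hD : Fintype D] [hDe : DecidableEq D]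
    (C₀ : Matrix D D ℝ) (C : Fin q → Matrix D D ℝ) (B : U → Matrix D D ℝ)
    (h1 : C₀.IsSymm) (h2 : ∀ i, (C i).IsSymm) (h3 : ∀ j, (B j).IsSymm) :
    GRep {w : Rn q | ∃ v : U → ℝ,
      (C₀ + ∑ i, w i • C i + ∑ j, v j • B j).PosSemidef} :=
  ⟨U, D, hU, hD, hDe, C₀, C, B, h1, h2, h3, rfl⟩

lemma GRep_Hset {n N d : ℕ} {A₀ : Matrix (Fin d) (Fin d) ℝ}
    {A : Fin n → Matrix (Fin d) (Fin d) ℝ} {B : Fin N → Matrix (Fin d) (Fin d) ℝ}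
    (h1 : A₀.IsSymm) (h2 : ∀ i, (A i).IsSymm) (h3 : ∀ j, (B j).IsSymm) :
    GRep (Hset A₀ A B) := by
  have key : ∀ w : Rn (n+1),
      ((0 : Matrix (Fin d) (Fin d) ℝ) + ∑ i : Fin (n+1), w i • extC A₀ A i)
        = w 0 • A₀ + ∑ i : Fin n, w i.succ • A i := by
    intro w
    rw [zero_add, Fin.sum_univ_succ]
    simp
  have hs : Hset A₀ A B
      = {w : Rn (n+1) | 0 ≤ ∑ i, (if i = 0 then (1:ℝ) else 0) * w i}
        ∩ {w : Rn (n+1) | ∃ v : Fin N → ℝ,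
            ((0 : Matrix (Fin d) (Fin d) ℝ) + ∑ i, w i • extC A₀ A i
              + ∑ j, v j • B j).PosSemidef} := by
    ext w
    simp only [Hset, Set.mem_setOf_eq, Set.mem_inter_iff]
    have e1 : ∑ i, (if i = (0 : Fin (n+1)) then (1:ℝ) else 0) * w i = w 0 := by
      simp [ite_mul]
    rw [e1]
    refine and_congr Iff.rfl ?_
    constructor
    · rintro ⟨v, hv⟩
      exact ⟨v, by rw [key]; exact hv⟩
    · rintro ⟨v, hv⟩
      rw [key] at hv
      exact ⟨v, hv⟩
  rw [hs]
  refine (GRep_halfspace _ 0).inter (GRep.of_rep (Fin N) (Fin d) 0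
    (extC A₀ A) B ?_ ?_ h3)
  · simp [Matrix.IsSymm]
  · intro i
    induction i using Fin.cases with
    | zero => simpa using h1
    | succ i => simpa using h2 i


lemma Hset_mem_scale {n N d : ℕ} {A₀ : Matrix (Fin d) (Fin d) ℝ}
    {A : Fin n → Matrix (Fin d) (Fin d) ℝ} {B : Fin N → Matrix (Fin d) (Fin d) ℝ}
    (x : Rn n) (u : Fin N → ℝ)
    (hu : (A₀ + ∑ i, x i • A i + ∑ j, u j • B j).PosSemidef)
    (t : ℝ) (ht : 0 ≤ t) :
    toRn (Fin.cases t (fun i => t * x i)) ∈ Hset A₀ A B := by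
  refine ⟨by simpa using ht, fun j => t * u j, ?_⟩
  have : (toRn (Fin.cases t (fun i => t * x i)) 0 • A₀
      + ∑ i, toRn (Fin.cases t (fun i => t * x i)) i.succ • A i + ∑ j, (t * u j) • B j)
      = t • (A₀ + ∑ i, x i • A i + ∑ j, u j • B j) := by
    simp only [toRn_apply, Fin.cases_zero, Fin.cases_succ]
    rw [smul_add, smul_add, Finset.smul_sum, Finset.smul_sum]
    congr 1
    · congr 1
      exact Finset.sum_congr rfl fun i _ => by rw [smul_smul]
    · exact Finset.sum_congr rfl fun j _ => by rw [smul_smul]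
  rw [this]
  exact posSemidef_smul hu ht

lemma Hset_mem_pos {n N d : ℕ} {A₀ : Matrix (Fin d) (Fin d) ℝ}
    {A : Fin n → Matrix (Fin d) (Fin d) ℝ} {B : Fin N → Matrix (Fin d) (Fin d) ℝ}
    (w : Rn (n+1)) (hw : w ∈ Hset A₀ A B) (h0 : 0 < w 0) :
    ∃ u : Fin N → ℝ,
      (A₀ + ∑ i, (w i.succ / w 0) • A i + ∑ j, u j • B j).PosSemidef := by
  obtain ⟨-, v, hv⟩ := hw
  refine ⟨fun j => v j / w 0, ?_⟩
  have : (A₀ + ∑ i, (w i.succ / w 0) • A i + ∑ j, (v j / w 0) • B j)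
      = (w 0)⁻¹ • (w 0 • A₀ + ∑ i, w i.succ • A i + ∑ j, v j • B j) := by
    rw [smul_add, smul_add, Finset.smul_sum, Finset.smul_sum, smul_smul,
      inv_mul_cancel₀ h0.ne', one_smul]
    congr 1
    · congr 1
      exact Finset.sum_congr rfl fun i _ => by rw [smul_smul, div_eq_inv_mul]
    · exact Finset.sum_congr rfl fun j _ => by rw [smul_smul, div_eq_inv_mul]
  rw [this]
  exact posSemidef_smul hv (inv_nonneg.mpr h0.le)

lemma Hset_ray {n N d : ℕ} {A₀ : Matrix (Fin d) (Fin d) ℝ}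
    {A : Fin n → Matrix (Fin d) (Fin d) ℝ} {B : Fin N → Matrix (Fin d) (Fin d) ℝ}
    (w : Rn (n+1)) (hw : w ∈ Hset A₀ A B) (h0 : w 0 = 0)
    (x₀ : Rn n) (u₀ : Fin N → ℝ)
    (hu₀ : (A₀ + ∑ i, x₀ i • A i + ∑ j, u₀ j • B j).PosSemidef)
    (t : ℝ) (ht : 0 ≤ t) :
    ∃ u : Fin N → ℝ,
      (A₀ + ∑ i, (x₀ + t • toRn (fun i => w i.succ)) i • A i
        + ∑ j, u j • B j).PosSemidef := by
  obtain ⟨-, v, hv⟩ := hw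
  rw [h0, zero_smul, zero_add] at hv
  refine ⟨fun j => u₀ j + t * v j, ?_⟩
  have : (A₀ + ∑ i, (x₀ + t • toRn (fun i => w i.succ)) i • A i
        + ∑ j, (u₀ j + t * v j) • B j)
      = (A₀ + ∑ i, x₀ i • A i + ∑ j, u₀ j • B j)
        + t • (∑ i, w i.succ • A i + ∑ j, v j • B j) := by
    rw [smul_add, Finset.smul_sum, Finset.smul_sum]
    have e1 : ∑ i, (x₀ + t • toRn (fun i => w i.succ)) i • A i
        = ∑ i, x₀ i • A i + ∑ i, t • (w i.succ • A i) := by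
      rw [← Finset.sum_add_distrib]
      refine Finset.sum_congr rfl fun i _ => ?_
      simp only [PiLp.add_apply, PiLp.smul_apply, toRn_apply, smul_eq_mul]
      rw [add_smul, smul_smul]
    have e2 : ∑ j, (u₀ j + t * v j) • B j
        = ∑ j, u₀ j • B j + ∑ j, t • (v j • B j) := by
      rw [← Finset.sum_add_distrib]
      refine Finset.sum_congr rfl fun j _ => ?_
      rw [add_smul, smul_smul]
    rw [e1, e2]
    abel
  rw [this]
  exact hu₀.add (posSemidef_smul hv ht)

lemma blocksum {m n : ℕ} (g : Fin (m*(n+1)) → ℝ) :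
    ∑ j, g j = ∑ k : Fin m, ∑ r : Fin (n+1), g (finProdFinEquiv (k,r)) :=
  ((Fintype.sum_equiv finProdFinEquiv _ _ fun _ => rfl).symm).trans
    (Fintype.sum_prod_type (f := fun p => g (finProdFinEquiv p)))

lemma Rn_sum_apply {n : ℕ} {ι : Type*} (s : Finset ι) (g : ι → Rn n) (i : Fin n) :
    (∑ k ∈ s, g k) i = ∑ k ∈ s, g k i := by
  induction s using Finset.cons_induction with
  | empty => simp
  | cons a s ha ih => rw [Finset.sum_cons, Finset.sum_cons, PiLp.add_apply, ih]

def extR {n : ℕ} (t : ℝ) (x : Fin n → ℝ) : Fin (n+1) → ℝ :=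
  fun i => if h : i = 0 then t else x (i.pred h)

@[simp] lemma extR_zero {n : ℕ} (t : ℝ) (x : Fin n → ℝ) : extR t x 0 = t := by simp [extR]

@[simp] lemma extR_succ {n : ℕ} (t : ℝ) (x : Fin n → ℝ) (i : Fin n) : extR t x i.succ = x i := by
  simp [extR, Fin.succ_ne_zero]


def blk (n m : ℕ) (k : Fin m) (r : Fin (n+1)) : Fin (n + m*(n+1)) :=
  Fin.natAdd n (finProdFinEquiv (k, r))

def a1coef (n m : ℕ) (i : Fin n) : Fin (n + m*(n+1)) → ℝ :=
  Fin.addCases (fun i' => if i' = i then 1 else 0)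
    (fun j => if (finProdFinEquiv.symm j).2 = i.succ then -1 else 0)

def a2coef (n m : ℕ) : Fin (n + m*(n+1)) → ℝ :=
  Fin.addCases (fun _ => 0)
    (fun j : Fin (m*(n+1)) => if ((finProdFinEquiv.symm j) : Fin m × Fin (n+1)).2 = 0 then 1 else 0)

lemma sum_a1 (n m : ℕ) (i : Fin n) (z : Rn (n + m*(n+1))) :
    ∑ j, a1coef n m i j * z j
      = z (Fin.castAdd (m*(n+1)) i) - ∑ k : Fin m, z (blk n m k i.succ) := by
  rw [Fin.sum_univ_add (f := fun j => a1coef n m i j * z j)]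
  have e1 : ∑ i' : Fin n, a1coef n m i (Fin.castAdd (m*(n+1)) i') * z (Fin.castAdd (m*(n+1)) i')
      = z (Fin.castAdd (m*(n+1)) i) := by
    have : ∀ i' : Fin n, a1coef n m i (Fin.castAdd (m*(n+1)) i')
        = if i' = i then 1 else 0 := fun i' => Fin.addCases_left i'
    simp only [this, ite_mul, one_mul, zero_mul]
    rw [Finset.sum_ite_eq' Finset.univ i (fun i' => z (Fin.castAdd (m*(n+1)) i'))]
    simp
  have e2 : ∑ j : Fin (m*(n+1)), a1coef n m i (Fin.natAdd n j) * z (Fin.natAdd n j)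
      = -∑ k : Fin m, z (blk n m k i.succ) := by
    have ha : ∀ j : Fin (m*(n+1)), a1coef n m i (Fin.natAdd n j)
        = if (finProdFinEquiv.symm j).2 = i.succ then -1 else 0 := fun j => Fin.addCases_right j
    simp only [ha]
    rw [blocksum (g := fun j => (if (finProdFinEquiv.symm j).2 = i.succ then (-1:ℝ) else 0)
      * z (Fin.natAdd n j))]
    rw [← Finset.sum_neg_distrib]
    refine Finset.sum_congr rfl fun k _ => ?_
    simp only [Equiv.symm_apply_apply, ite_mul, neg_mul, one_mul, zero_mul]
    rw [Finset.sum_ite_eq' Finset.univ i.succ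
      (fun r => -z (Fin.natAdd n (finProdFinEquiv (k, r))))]
    simp [blk]
  rw [e1, e2, sub_eq_add_neg]

lemma sum_a2 (n m : ℕ) (z : Rn (n + m*(n+1))) :
    ∑ j, a2coef n m j * z j = ∑ k : Fin m, z (blk n m k 0) := by
  rw [Fin.sum_univ_add (f := fun j => a2coef n m j * z j)]
  have e1 : ∑ i' : Fin n, a2coef n m (Fin.castAdd (m*(n+1)) i') * z (Fin.castAdd (m*(n+1)) i')
      = 0 := by
    have : ∀ i' : Fin n, a2coef n m (Fin.castAdd (m*(n+1)) i') = 0 := fun i' =>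
      Fin.addCases_left i'
    simp [this]
  have e2 : ∑ j : Fin (m*(n+1)), a2coef n m (Fin.natAdd n j) * z (Fin.natAdd n j)
      = ∑ k : Fin m, z (blk n m k 0) := by
    have ha : ∀ j : Fin (m*(n+1)), a2coef n m (Fin.natAdd n j)
        = if (finProdFinEquiv.symm j).2 = 0 then 1 else 0 := fun j => Fin.addCases_right j
    simp only [ha]
    rw [blocksum (g := fun j => (if (finProdFinEquiv.symm j).2 = 0 then (1:ℝ) else 0)
      * z (Fin.natAdd n j))]
    refine Finset.sum_congr rfl fun k _ => ?_
    simp only [Equiv.symm_apply_apply, ite_mul, one_mul, zero_mul]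
    rw [Finset.sum_ite_eq' Finset.univ (0 : Fin (n+1))
      (fun r => z (Fin.natAdd n (finProdFinEquiv (k, r))))]
    simp [blk]
  rw [e1, e2, zero_add]

end SDPHelpers

/-- if each `conv(Tₖ)` is SDP representable (`Tₖ` nonempty bounded),
then `conv(⋃ₖ Tₖ)` is SDP representable. -/
theorem isSDPRepresentable_convexHull_union {n m : ℕ} (T : Fin m → Set (Rn n))
    (hne : ∀ k, (T k).Nonempty) (hbd : ∀ k, Bornology.IsBounded (T k))
    (h : ∀ k, IsSDPRepresentable (convexHull ℝ (T k))) :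
    IsSDPRepresentable (convexHull ℝ (⋃ k, T k)) := by
  classical
  choose N d A₀ A B hs1 hs2 hs3 hSeq using h
  -- the lifted constraint set
  set C : Set (Rn (n + m*(n+1))) :=
    (⋂ i : Fin n, {z : Rn (n + m*(n+1)) | ∑ j, a1coef n m i j * z j = 0}) ∩
    ({z : Rn (n + m*(n+1)) | ∑ j, a2coef n m j * z j = 1} ∩
      ⋂ k : Fin m, {z : Rn (n + m*(n+1)) |
        toRn (fun r => z (blk n m k r)) ∈ Hset (A₀ k) (A k) (B k)}) with hC
  have hCrep : GRep C :=
    (GRep.iInter fun i => GRep_hyperplane _ 0).inter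
      ((GRep_hyperplane _ 1).inter
        (GRep.iInter fun k => (GRep_Hset (hs1 k) (hs2 k) (hs3 k)).comap (blk n m k)))
  have hPrep : GRep {x : Rn n | ∃ y : Rn (m*(n+1)), appnd x y ∈ C} := hCrep.proj
  suffices hPS : {x : Rn n | ∃ y : Rn (m*(n+1)), appnd x y ∈ C}
      = convexHull ℝ (⋃ k, T k) by
    rw [← hPS]
    exact hPrep.isSDPRepresentable
  apply Set.Subset.antisymm
  · -- P ⊆ conv
    rintro x ⟨y, hy⟩
    obtain ⟨hE', hΛ', hH'⟩ := hy
    have hH : ∀ k, toRn (fun r => appnd x y (blk n m k r)) ∈ Hset (A₀ k) (A k) (B k) :=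
      fun k => Set.mem_iInter.mp hH' k
    have hE : ∀ i : Fin n, x i = ∑ k : Fin m, appnd x y (blk n m k i.succ) := by
      intro i
      have := Set.mem_iInter.mp hE' i
      rw [Set.mem_setOf_eq, sum_a1, sub_eq_zero, appnd_castAdd] at this
      exact this
    have hΛ : ∑ k : Fin m, appnd x y (blk n m k 0) = 1 := by
      have := hΛ'
      rwa [Set.mem_setOf_eq, sum_a2] at this
    -- the weights
    have hlam0 : ∀ k, 0 ≤ appnd x y (blk n m k 0) := fun k => by simpa using (hH k).1
    -- zero-weight blocks vanish
    have hwzero : ∀ k, appnd x y (blk n m k 0) = 0 →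
        ∀ i : Fin n, appnd x y (blk n m k i.succ) = 0 := by
      intro k hk0 i
      set p₀ : Rn n := (hne k).choose with hp₀
      have hp₀T : p₀ ∈ convexHull ℝ (T k) := subset_convexHull ℝ _ (hne k).choose_spec
      rw [hSeq k] at hp₀T
      obtain ⟨u₀, hu₀⟩ := hp₀T
      set yk : Rn n := toRn (fun i => appnd x y (blk n m k i.succ)) with hyk
      have hray : ∀ t : ℝ, 0 ≤ t → (p₀ + t • yk) ∈ convexHull ℝ (T k) := by
        intro t ht
        rw [hSeq k]
        exact Hset_ray _ (hH k) (by simpa using hk0) p₀ u₀ hu₀ t ht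
      obtain ⟨R, hR⟩ := isBounded_iff_forall_norm_le.mp (isBounded_convexHull.mpr (hbd k))
      have hyk0 : yk = 0 := by
        by_contra hy0
        have hn : 0 < ‖yk‖ := norm_pos_iff.mpr hy0
        set t : ℝ := (R + ‖p₀‖ + 1) / ‖yk‖ with htdef
        have hR0 : ‖p₀‖ ≤ R := hR _ (by simpa using hray 0 le_rfl)
        have ht : 0 ≤ t := by
          apply div_nonneg _ hn.le
          have : (0:ℝ) ≤ ‖p₀‖ := norm_nonneg _
          linarith
        have h1 : ‖p₀ + t • yk‖ ≤ R := hR _ (hray t ht)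
        have h2 : ‖t • yk‖ ≤ ‖p₀ + t • yk‖ + ‖p₀‖ := by
          calc ‖t • yk‖ = ‖(p₀ + t • yk) - p₀‖ := by rw [add_sub_cancel_left]
            _ ≤ ‖p₀ + t • yk‖ + ‖p₀‖ := norm_sub_le _ _
        have h3 : ‖t • yk‖ = R + ‖p₀‖ + 1 := by
          rw [norm_smul, Real.norm_eq_abs, abs_of_nonneg ht, htdef,
            div_mul_cancel₀ _ hn.ne']
        linarith
      have : yk i = 0 := by rw [hyk0]; simp
      simpa [hyk] using this
    -- the convex combination points
    have hxk_mem : ∀ k, (if 0 < appnd x y (blk n m k 0) then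
        toRn (fun i => appnd x y (blk n m k i.succ) / appnd x y (blk n m k 0))
      else (hne k).choose) ∈ convexHull ℝ (⋃ k', T k') := by
      intro k
      by_cases hk : 0 < appnd x y (blk n m k 0)
      · rw [if_pos hk]
        refine convexHull_mono (Set.subset_iUnion T k) ?_
        rw [hSeq k]
        have := Hset_mem_pos _ (hH k) (by simpa using hk)
        simpa using this
      · rw [if_neg hk]
        exact subset_convexHull ℝ _ (Set.mem_iUnion.mpr ⟨k, (hne k).choose_spec⟩)
    have hxsum : x = ∑ k, appnd x y (blk n m k 0) • (if 0 < appnd x y (blk n m k 0) then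
        toRn (fun i => appnd x y (blk n m k i.succ) / appnd x y (blk n m k 0))
      else (hne k).choose) := by
      ext i
      rw [Rn_sum_apply]
      rw [hE i]
      refine Finset.sum_congr rfl fun k _ => ?_
      rw [PiLp.smul_apply, smul_eq_mul]
      by_cases hk : 0 < appnd x y (blk n m k 0)
      · rw [if_pos hk]
        simp only [toRn_apply]
        rw [mul_div_cancel₀ _ hk.ne']
      · rw [if_neg hk]
        have hk0 : appnd x y (blk n m k 0) = 0 := le_antisymm (not_lt.mp hk) (hlam0 k)
        rw [hk0, hwzero k hk0 i, zero_mul]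
    rw [hxsum]
    exact (convex_convexHull ℝ _).sum_mem (fun k _ => hlam0 k) hΛ (fun k _ => hxk_mem k)
  · -- conv ⊆ P
    refine convexHull_min ?_ hPrep.convex
    rintro x hx
    obtain ⟨k₀, hk₀⟩ := Set.mem_iUnion.mp hx
    set g : Fin (m*(n+1)) → ℝ := fun j =>
      if (finProdFinEquiv.symm j).1 = k₀ then
        extR 1 (fun i => x i) ((finProdFinEquiv.symm j) :
          Fin m × Fin (n+1)).2 else 0 with hg
    have hz_at : ∀ (k : Fin m) (r : Fin (n+1)), appnd x (toRn g) (blk n m k r)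
        = if k = k₀ then extR 1 (fun i => x i) r else 0 := by
      intro k r
      rw [blk, appnd_natAdd, toRn_apply]
      simp only [hg]
      rw [Equiv.symm_apply_apply]
    refine ⟨toRn g, Set.mem_iInter.mpr fun i => ?_, ?_, Set.mem_iInter.mpr fun k => ?_⟩
    · rw [Set.mem_setOf_eq, sum_a1, appnd_castAdd, sub_eq_zero]
      have : ∀ k : Fin m, appnd x (toRn g) (blk n m k i.succ)
          = if k = k₀ then x i else 0 := by
        intro k
        rw [hz_at k i.succ, extR_succ]
      rw [Finset.sum_congr rfl fun k _ => this k]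
      simp
    · rw [Set.mem_setOf_eq, sum_a2]
      have : ∀ k : Fin m, appnd x (toRn g) (blk n m k 0)
          = if k = k₀ then 1 else 0 := by
        intro k
        rw [hz_at k 0, extR_zero]
      rw [Finset.sum_congr rfl fun k _ => this k]
      simp
    · rw [Set.mem_setOf_eq]
      by_cases hk : k = k₀
      · subst hk
        have hxS : x ∈ convexHull ℝ (T k) := subset_convexHull ℝ _ hk₀
        rw [hSeq k] at hxS
        obtain ⟨u, hu⟩ := hxS
        refine ⟨by simp [hz_at], u, ?_⟩
        have e0 : toRn (fun r => appnd x (toRn g) (blk n m k r)) 0 = 1 := by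
          simp [hz_at]
        have es : ∀ i : Fin n,
            toRn (fun r => appnd x (toRn g) (blk n m k r)) i.succ = x i := by
          intro i
          simp [hz_at]
        rw [e0, Finset.sum_congr rfl fun i (_ : i ∈ Finset.univ) => by rw [es i], one_smul]
        exact hu
      · refine ⟨by simp [hz_at, hk], 0, ?_⟩
        have e0 : toRn (fun r => appnd x (toRn g) (blk n m k r)) 0 = 0 := by
          simp [hz_at, hk]
        have es : ∀ i : Fin n,
            toRn (fun r => appnd x (toRn g) (blk n m k r)) i.succ = 0 := by
          intro i
          simp [hz_at, hk]
        rw [e0, Finset.sum_congr rfl fun i (_ : i ∈ Finset.univ) => by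
          rw [es i, zero_smul], zero_smul]
        simpa using Matrix.PosSemidef.zero
end
end
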